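/- arXiv:2510.06495 — 12 statements merged into one kernel-verified Lean document; each statement's English description precedes it below -/
import Mathlib

section
/- Let q be a prime power, ℓ, m ≥ 1, let A and B be ℓm×ℓm matrices over F_q that are F_q-linear combinations of the monomials x^a y^b (x = S_ℓ ⊗ I_m, y = I_ℓ ⊗ S_m), and let γ₁, γ₂, δ₁, δ₂ ∈ F_q be nonzero. Set H_X = [γ₁A | γ₂B] and H_Z = [δ₁Bᵀ | δ₂Aᵀ]. Then rank_{F_q}(H_X) = rank_{F_q}(H_Z). -/
open Matrix Kronecker

/-!
Negation `p ↦ -p` of `ℤ/ℓ × ℤ/m` reverses the cyclic shifts, so `xᵀ` and `yᵀ` are `x` and `y`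
with rows and columns permuted by negation. Since `x` and `y` commute, the same holds for every
bivariate-bicycle matrix, hence `H_Z` is a row and column permutation of `[δ₁B | δ₂A]`. Scaling
the two column blocks by nonzero scalars and swapping them does not change the rank, so both
`H_X` and `H_Z` have the rank of `[A | B]`.
-/

/-- The ℓ×ℓ cyclic shift matrix over `F`: entry `(i,j)` is 1 iff `j ≡ i+1 (mod ℓ)`. -/
def cyclicShift (ℓ : ℕ) [NeZero ℓ] (F : Type*) [Zero F] [One F] :
    Matrix (ZMod ℓ) (ZMod ℓ) F :=
  fun i j => if j = i + 1 then 1 else 0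

theorem cyclicShift_transpose (ℓ : ℕ) [NeZero ℓ] (F : Type*) [Zero F] [One F] :
    (cyclicShift ℓ F)ᵀ = (cyclicShift ℓ F).submatrix (Equiv.neg _) (Equiv.neg _) := by
  ext i j
  have hshift : i = j + 1 ↔ -j = -i + 1 :=
    ⟨fun h => by linear_combination h, fun h => by linear_combination h⟩
  simp only [transpose_apply, submatrix_apply, cyclicShift, Equiv.neg_apply, hshift]

namespace Matrix

theorem transpose_kronecker_eq_submatrix {l n R : Type*} [Mul R]
    {A : Matrix l l R} {B : Matrix n n R} {σ : Equiv.Perm l} {τ : Equiv.Perm n}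
    (hA : Aᵀ = A.submatrix σ σ) (hB : Bᵀ = B.submatrix τ τ) :
    (A ⊗ₖ B)ᵀ = (A ⊗ₖ B).submatrix (σ.prodCongr τ) (σ.prodCongr τ) := by
  rw [← kroneckerMap_transpose, hA, hB]
  rfl

theorem transpose_one_eq_submatrix {n R : Type*} [DecidableEq n] [Zero R] [One R]
    (σ : Equiv.Perm n) : (1 : Matrix n n R)ᵀ = (1 : Matrix n n R).submatrix σ σ := by
  rw [transpose_one, submatrix_one_equiv]

section TransposeEqSubmatrix

variable {n R : Type*} [Fintype n] [CommSemiring R] {σ : Equiv.Perm n}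
  {M N : Matrix n n R}

theorem transpose_pow_eq_submatrix [DecidableEq n] (hM : Mᵀ = M.submatrix σ σ) (k : ℕ) :
    (M ^ k)ᵀ = (M ^ k).submatrix σ σ := by
  rw [transpose_pow, hM]
  exact (map_pow (reindexAlgEquiv R R σ.symm) M k).symm

theorem _root_.Commute.transpose_mul_eq_submatrix (hMN : Commute M N)
    (hM : Mᵀ = M.submatrix σ σ) (hN : Nᵀ = N.submatrix σ σ) :
    (M * N)ᵀ = (M * N).submatrix σ σ := by
  rw [transpose_mul, hM, hN, submatrix_mul_equiv, hMN.eq]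

theorem transpose_eq_submatrix_of_mem_span [DecidableEq n] {x y : Matrix n n R}
    (hxy : Commute x y)
    (hx : xᵀ = x.submatrix σ σ) (hy : yᵀ = y.submatrix σ σ)
    (hM : M ∈ Submodule.span R {M : Matrix n n R | ∃ a b : ℕ, M = x ^ a * y ^ b}) :
    Mᵀ = M.submatrix σ σ := by
  induction hM using Submodule.span_induction with
  | mem _ h =>
    obtain ⟨a, b, rfl⟩ := h
    exact (hxy.pow_pow a b).transpose_mul_eq_submatrix
      (transpose_pow_eq_submatrix hx a) (transpose_pow_eq_submatrix hy b)
  | zero => rfl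
  | add _ _ _ _ hM hN => rw [transpose_add, hM, hN]; rfl
  | smul _ _ _ hM => rw [transpose_smul, hM]; rfl

end TransposeEqSubmatrix

section RankFromCols

variable {m n₁ n₂ K : Type*} [Fintype n₁] [Fintype n₂] [Field K]

theorem rank_fromCols_comm (A : Matrix m n₁ K) (B : Matrix m n₂ K) :
    (fromCols A B).rank = (fromCols B A).rank := by
  rw [← rank_submatrix (fromCols A B) (Equiv.refl m) (Equiv.sumComm n₂ n₁)]
  congr 1
  ext i (j | j) <;> rfl

theorem rank_fromCols_smul (A : Matrix m n₁ K) (B : Matrix m n₂ K) {a b : K}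
    (ha : a ≠ 0) (hb : b ≠ 0) :
    (fromCols (a • A) (b • B)).rank = (fromCols A B).rank := by
  classical
  let D : Matrix (n₁ ⊕ n₂) (n₁ ⊕ n₂) K := diagonal (Sum.elim (fun _ => a) (fun _ => b))
  have hD : fromCols (a • A) (b • B) = fromCols A B * D := by
    ext i (j | j) <;> simp [D, mul_comm]
  have hdet : IsUnit D.det := by
    simp only [D, det_diagonal, isUnit_iff_ne_zero, Finset.prod_ne_zero_iff, Finset.mem_univ,
      forall_const, Sum.forall, Sum.elim_inl, Sum.elim_inr]
    exact ⟨fun _ => ha, fun _ => hb⟩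
  rw [hD, rank_mul_eq_left_of_isUnit_det D _ hdet]

end RankFromCols

end Matrix

theorem bb_rank_HX_eq_rank_HZ_general
    {F : Type*} [Field F] (ℓ m : ℕ) [NeZero ℓ] [NeZero m]
    (x y A B : Matrix (ZMod ℓ × ZMod m) (ZMod ℓ × ZMod m) F)
    (hx : x = cyclicShift ℓ F ⊗ₖ (1 : Matrix (ZMod m) (ZMod m) F))
    (hy : y = (1 : Matrix (ZMod ℓ) (ZMod ℓ) F) ⊗ₖ cyclicShift m F)
    (hA : A ∈ Submodule.span F {M : Matrix (ZMod ℓ × ZMod m) (ZMod ℓ × ZMod m) F |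
        ∃ a b : ℕ, M = x ^ a * y ^ b})
    (hB : B ∈ Submodule.span F {M : Matrix (ZMod ℓ × ZMod m) (ZMod ℓ × ZMod m) F |
        ∃ a b : ℕ, M = x ^ a * y ^ b})
    (γ₁ γ₂ δ₁ δ₂ : F) (hγ₁ : γ₁ ≠ 0) (hγ₂ : γ₂ ≠ 0) (hδ₁ : δ₁ ≠ 0) (hδ₂ : δ₂ ≠ 0)
    (HX HZ : Matrix (ZMod ℓ × ZMod m) ((ZMod ℓ × ZMod m) ⊕ (ZMod ℓ × ZMod m)) F)
    (hHX : HX = fromCols (γ₁ • A) (γ₂ • B))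
    (hHZ : HZ = fromCols (δ₁ • Bᵀ) (δ₂ • Aᵀ)) :
    HX.rank = HZ.rank := by
  let σ := (Equiv.neg (ZMod ℓ)).prodCongr (Equiv.neg (ZMod m))
  have hxy : Commute x y := by
    rw [hx, hy, Commute, SemiconjBy, ← mul_kronecker_mul, ← mul_kronecker_mul,
      Matrix.one_mul, Matrix.mul_one, Matrix.one_mul, Matrix.mul_one]
  have hxσ : xᵀ = x.submatrix σ σ := by
    rw [hx]
    exact transpose_kronecker_eq_submatrix (cyclicShift_transpose ℓ F)
      (transpose_one_eq_submatrix _)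
  have hyσ : yᵀ = y.submatrix σ σ := by
    rw [hy]
    exact transpose_kronecker_eq_submatrix (transpose_one_eq_submatrix _)
      (cyclicShift_transpose m F)
  have hAσ := transpose_eq_submatrix_of_mem_span hxy hxσ hyσ hA
  have hBσ := transpose_eq_submatrix_of_mem_span hxy hxσ hyσ hB
  calc HX.rank = (fromCols A B).rank := by rw [hHX, rank_fromCols_smul A B hγ₁ hγ₂]
    _ = (fromCols (δ₁ • B) (δ₂ • A)).rank := by
      rw [rank_fromCols_comm, rank_fromCols_smul B A hδ₁ hδ₂]
    _ = ((fromCols (δ₁ • B) (δ₂ • A)).submatrix σ (Sum.map σ σ)).rank :=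
      (rank_submatrix _ σ (σ.sumCongr σ)).symm
    _ = HZ.rank := by
      rw [hHZ, hAσ, hBσ]
      congr 1
      ext i (j | j) <;> rfl

/-- for bivariate-bicycle matrices `A`, `B` over `F_q` and nonzero scalars
`γ₁, γ₂, δ₁, δ₂`, the parity-check matrices `H_X = [γ₁A | γ₂B]` and `H_Z = [δ₁Bᵀ | δ₂Aᵀ]`
have equal rank over `F_q`. -/
theorem bb_rank_HX_eq_rank_HZ
    {F : Type*} [Field F] [Fintype F] (ℓ m : ℕ) [NeZero ℓ] [NeZero m]
    (x y A B : Matrix (ZMod ℓ × ZMod m) (ZMod ℓ × ZMod m) F)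
    (hx : x = cyclicShift ℓ F ⊗ₖ (1 : Matrix (ZMod m) (ZMod m) F))
    (hy : y = (1 : Matrix (ZMod ℓ) (ZMod ℓ) F) ⊗ₖ cyclicShift m F)
    (hA : A ∈ Submodule.span F {M : Matrix (ZMod ℓ × ZMod m) (ZMod ℓ × ZMod m) F |
        ∃ a b : ℕ, M = x ^ a * y ^ b})
    (hB : B ∈ Submodule.span F {M : Matrix (ZMod ℓ × ZMod m) (ZMod ℓ × ZMod m) F |
        ∃ a b : ℕ, M = x ^ a * y ^ b})
    (γ₁ γ₂ δ₁ δ₂ : F) (hγ₁ : γ₁ ≠ 0) (hγ₂ : γ₂ ≠ 0) (hδ₁ : δ₁ ≠ 0) (hδ₂ : δ₂ ≠ 0)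
    (HX HZ : Matrix (ZMod ℓ × ZMod m) ((ZMod ℓ × ZMod m) ⊕ (ZMod ℓ × ZMod m)) F)
    (hHX : HX = fromCols (γ₁ • A) (γ₂ • B))
    (hHZ : HZ = fromCols (δ₁ • Bᵀ) (δ₂ • Aᵀ)) :
    HX.rank = HZ.rank :=
  bb_rank_HX_eq_rank_HZ_general ℓ m x y A B hx hy hA hB γ₁ γ₂ δ₁ δ₂ hγ₁ hγ₂ hδ₁ hδ₂ HX HZ hHX hHZ
end

section
/- Let q be a prime power, ℓ, m ≥ 1, let A and B be ℓm×ℓm matrices over F_q that are F_q-linear combinations of the monomials x^a y^b (x = S_ℓ ⊗ I_m, y = I_ℓ ⊗ S_m), and let γ₁, γ₂, δ₁, δ₂ ∈ F_q be nonzero. Set H_X = [γ₁A | γ₂B] and H_Z = [δ₁Bᵀ | δ₂Aᵀ]. Then 2ℓm − rank_{F_q}(H_X) − rank_{F_q}(H_Z) = 2 · dim_{F_q}(ker A ∩ ker B); i.e., the qudit bivariate bicycle code on n = 2ℓm physical qudits encodes k = 2 · dim(ker A ∩ ker B) logical qudits. -/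
open Matrix Kronecker

/-!
`x` and `y` are circulant matrices over the group `ℤ/ℓ × ℤ/m`, hence so are `A` and `B`, and
transposing a circulant matrix permutes its rows and columns by `g ↦ -g`. Hence
`rank H_X = rank [Aᵀ; Bᵀ] = rank [A; B]` and `rank H_Z = rank [B; A] = rank [A; B]` (nonzero
scalars do not change kernels), while rank–nullity gives
`rank [A; B] = ℓm - dim (ker A ∩ ker B)`.
-/

namespace Matrix

section Circulant

variable {G R : Type*}

theorem circulant_kronecker_circulant {H : Type*} [Sub G] [Sub H] [Mul R] (v : G → R)
    (w : H → R) : circulant v ⊗ₖ circulant w = circulant fun p : G × H => v p.1 * w p.2 :=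
  rfl

theorem transpose_circulant_eq_submatrix_neg [AddCommGroup G] (v : G → R) :
    (circulant v)ᵀ = (circulant v).submatrix (Equiv.neg G) (Equiv.neg G) := by
  ext i j
  simp [circulant_apply, neg_add_eq_sub]

variable [AddCommGroup G] [Fintype G] [DecidableEq G] [CommSemiring R]

theorem exists_circulant_pow_eq (v : G → R) (a : ℕ) : ∃ w, circulant v ^ a = circulant w := by
  induction a with
  | zero => exact ⟨Pi.single 0 1, (circulant_single_one R G).symm⟩
  | succ a ih =>
    obtain ⟨w, hw⟩ := ih
    exact ⟨_, by rw [pow_succ, hw, circulant_mul]⟩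

theorem exists_eq_circulant_of_mem_span_pow_mul_pow {x y M : Matrix G G R} {u v : G → R}
    (hx : x = circulant u) (hy : y = circulant v)
    (hM : M ∈ Submodule.span R {M | ∃ a b : ℕ, M = x ^ a * y ^ b}) :
    ∃ w, M = circulant w := by
  induction hM using Submodule.span_induction with
  | mem M hM =>
    obtain ⟨a, b, rfl⟩ := hM
    obtain ⟨u', hu'⟩ := exists_circulant_pow_eq u a
    obtain ⟨v', hv'⟩ := exists_circulant_pow_eq v b
    exact ⟨_, by rw [hx, hy, hu', hv', circulant_mul]⟩
  | zero => exact ⟨0, (circulant_zero R G).symm⟩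
  | add M N _ _ hM hN =>
    obtain ⟨w, rfl⟩ := hM
    obtain ⟨w', rfl⟩ := hN
    exact ⟨w + w', (circulant_add w w').symm⟩
  | smul c M _ hM =>
    obtain ⟨w, rfl⟩ := hM
    exact ⟨c • w, (circulant_smul c w).symm⟩

end Circulant

section BlockRank

variable {K : Type*} [Field K] {m m' n : Type*} [Fintype n]

theorem ker_mulVecLin_fromRows (M : Matrix m n K) (N : Matrix m' n K) :
    LinearMap.ker (fromRows M N).mulVecLin =
      LinearMap.ker M.mulVecLin ⊓ LinearMap.ker N.mulVecLin := by
  ext v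
  simp [fromRows_mulVec, funext_iff, Sum.forall]

theorem rank_fromRows_add_finrank_ker_inf (M : Matrix m n K) (N : Matrix m' n K) :
    (fromRows M N).rank +
        Module.finrank K ↥(LinearMap.ker M.mulVecLin ⊓ LinearMap.ker N.mulVecLin) =
      Fintype.card n := by
  rw [rank, ← ker_mulVecLin_fromRows, LinearMap.finrank_range_add_finrank_ker,
    Module.finrank_fintype_fun_eq_card]

theorem ker_mulVecLin_smul (M : Matrix m n K) {c : K} (hc : c ≠ 0) :
    LinearMap.ker (c • M).mulVecLin = LinearMap.ker M.mulVecLin := by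
  ext v
  simp [hc]

theorem rank_fromRows_smul_smul (M : Matrix m n K) (N : Matrix m' n K) {c d : K}
    (hc : c ≠ 0) (hd : d ≠ 0) : (fromRows (c • M) (d • N)).rank = (fromRows M N).rank := by
  have h := rank_fromRows_add_finrank_ker_inf (c • M) (d • N)
  rw [ker_mulVecLin_smul M hc, ker_mulVecLin_smul N hd,
    ← rank_fromRows_add_finrank_ker_inf M N] at h
  omega

theorem rank_fromRows_comm (M : Matrix m n K) (N : Matrix m' n K) :
    (fromRows M N).rank = (fromRows N M).rank := by
  rw [← rank_submatrix (fromRows M N) (Equiv.sumComm m' m) (Equiv.refl n)]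
  congr 1
  ext (i | i) j <;> rfl

theorem rank_fromCols_smul_smul [Fintype m] {n' : Type*} [Fintype n'] (M : Matrix m n K)
    (N : Matrix m n' K) {c d : K} (hc : c ≠ 0) (hd : d ≠ 0) :
    (fromCols (c • M) (d • N)).rank = (fromRows Mᵀ Nᵀ).rank := by
  rw [← rank_transpose, transpose_fromCols, transpose_smul, transpose_smul,
    rank_fromRows_smul_smul _ _ hc hd]

theorem rank_fromRows_transpose_circulant {G : Type*} [AddCommGroup G] [Fintype G]
    (v w : G → K) :
    (fromRows (circulant v)ᵀ (circulant w)ᵀ).rank =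
      (fromRows (circulant v) (circulant w)).rank := by
  rw [transpose_circulant_eq_submatrix_neg, transpose_circulant_eq_submatrix_neg,
    ← rank_submatrix (fromRows (circulant v) (circulant w))
      (Equiv.sumCongr (Equiv.neg G) (Equiv.neg G)) (Equiv.neg G)]
  congr 1
  ext (i | i) j <;> rfl

end BlockRank

end Matrix

theorem cyclicShift_eq_circulant (ℓ : ℕ) [NeZero ℓ] (F : Type*) [Zero F] [One F] :
    cyclicShift ℓ F = circulant (Pi.single (-1) 1) := by
  ext i j
  have h : j = i + 1 ↔ i - j = -1 := by constructor <;> intro h <;> linear_combination -h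
  simp [cyclicShift, circulant_apply, Pi.single_apply, h]

theorem bb_code_dimension_general
    {F : Type*} [Field F] (ℓ m : ℕ) [NeZero ℓ] [NeZero m]
    (x y A B : Matrix (ZMod ℓ × ZMod m) (ZMod ℓ × ZMod m) F)
    (hx : x = cyclicShift ℓ F ⊗ₖ (1 : Matrix (ZMod m) (ZMod m) F))
    (hy : y = (1 : Matrix (ZMod ℓ) (ZMod ℓ) F) ⊗ₖ cyclicShift m F)
    (hA : A ∈ Submodule.span F {M : Matrix (ZMod ℓ × ZMod m) (ZMod ℓ × ZMod m) F |
        ∃ a b : ℕ, M = x ^ a * y ^ b})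
    (hB : B ∈ Submodule.span F {M : Matrix (ZMod ℓ × ZMod m) (ZMod ℓ × ZMod m) F |
        ∃ a b : ℕ, M = x ^ a * y ^ b})
    (γ₁ γ₂ δ₁ δ₂ : F) (hγ₁ : γ₁ ≠ 0) (hγ₂ : γ₂ ≠ 0) (hδ₁ : δ₁ ≠ 0) (hδ₂ : δ₂ ≠ 0)
    (HX HZ : Matrix (ZMod ℓ × ZMod m) ((ZMod ℓ × ZMod m) ⊕ (ZMod ℓ × ZMod m)) F)
    (hHX : HX = fromCols (γ₁ • A) (γ₂ • B))
    (hHZ : HZ = fromCols (δ₁ • Bᵀ) (δ₂ • Aᵀ)) :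
    (2 * (ℓ * m) : ℤ) - HX.rank - HZ.rank =
      2 * Module.finrank F
        ↥(LinearMap.ker A.mulVecLin ⊓ LinearMap.ker B.mulVecLin) := by
  obtain ⟨u, hx'⟩ : ∃ u, x = circulant u :=
    ⟨_, by
      rw [hx, cyclicShift_eq_circulant, ← circulant_single_one, circulant_kronecker_circulant]⟩
  obtain ⟨v, hy'⟩ : ∃ v, y = circulant v :=
    ⟨_, by
      rw [hy, cyclicShift_eq_circulant, ← circulant_single_one, circulant_kronecker_circulant]⟩
  obtain ⟨a, rfl⟩ := exists_eq_circulant_of_mem_span_pow_mul_pow hx' hy' hA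
  obtain ⟨b, rfl⟩ := exists_eq_circulant_of_mem_span_pow_mul_pow hx' hy' hB
  have hX : HX.rank = (fromRows (circulant a) (circulant b)).rank := by
    rw [hHX, rank_fromCols_smul_smul _ _ hγ₁ hγ₂, rank_fromRows_transpose_circulant]
  have hZ : HZ.rank = (fromRows (circulant a) (circulant b)).rank := by
    rw [hHZ, rank_fromCols_smul_smul _ _ hδ₁ hδ₂, transpose_transpose, transpose_transpose,
      rank_fromRows_comm]
  have hdim := rank_fromRows_add_finrank_ker_inf (circulant a) (circulant b)
  rw [Fintype.card_prod, ZMod.card, ZMod.card] at hdim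
  omega

/-- the qudit bivariate bicycle code on `n = 2ℓm` physical qudits with
parity checks `H_X = [γ₁A | γ₂B]`, `H_Z = [δ₁Bᵀ | δ₂Aᵀ]` encodes
`k = 2ℓm − rank H_X − rank H_Z = 2 · dim(ker A ∩ ker B)` logical qudits. -/
theorem bb_code_dimension
    {F : Type*} [Field F] [Fintype F] (ℓ m : ℕ) [NeZero ℓ] [NeZero m]
    (x y A B : Matrix (ZMod ℓ × ZMod m) (ZMod ℓ × ZMod m) F)
    (hx : x = cyclicShift ℓ F ⊗ₖ (1 : Matrix (ZMod m) (ZMod m) F))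
    (hy : y = (1 : Matrix (ZMod ℓ) (ZMod ℓ) F) ⊗ₖ cyclicShift m F)
    (hA : A ∈ Submodule.span F {M : Matrix (ZMod ℓ × ZMod m) (ZMod ℓ × ZMod m) F |
        ∃ a b : ℕ, M = x ^ a * y ^ b})
    (hB : B ∈ Submodule.span F {M : Matrix (ZMod ℓ × ZMod m) (ZMod ℓ × ZMod m) F |
        ∃ a b : ℕ, M = x ^ a * y ^ b})
    (γ₁ γ₂ δ₁ δ₂ : F) (hγ₁ : γ₁ ≠ 0) (hγ₂ : γ₂ ≠ 0) (hδ₁ : δ₁ ≠ 0) (hδ₂ : δ₂ ≠ 0)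
    (HX HZ : Matrix (ZMod ℓ × ZMod m) ((ZMod ℓ × ZMod m) ⊕ (ZMod ℓ × ZMod m)) F)
    (hHX : HX = fromCols (γ₁ • A) (γ₂ • B))
    (hHZ : HZ = fromCols (δ₁ • Bᵀ) (δ₂ • Aᵀ)) :
    (2 * (ℓ * m) : ℤ) - HX.rank - HZ.rank =
      2 * Module.finrank F
        ↥(LinearMap.ker A.mulVecLin ⊓ LinearMap.ker B.mulVecLin) :=
  bb_code_dimension_general ℓ m x y A B hx hy hA hB γ₁ γ₂ δ₁ δ₂ hγ₁ hγ₂ hδ₁ hδ₂ HX HZ hHX hHZ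
end

section
/- Let q be a prime power, ℓ, m ≥ 1, let A and B be ℓm×ℓm matrices over F_q that are F_q-linear combinations of the monomials x^a y^b (x = S_ℓ ⊗ I_m, y = I_ℓ ⊗ S_m), and let γ₁, γ₂, δ₁, δ₂ ∈ F_q be nonzero with γ₁δ₁ + γ₂δ₂ = 0. Set H_X = [γ₁A | γ₂B] and H_Z = [δ₁Bᵀ | δ₂Aᵀ], and suppose ker(H_Z) is not contained in rowspace(H_X). Then the two minimum logical weights coincide: min{wt(v) : v ∈ ker(H_Z) \ rowspace(H_X)} = min{wt(v) : v ∈ ker(H_X) \ rowspace(H_Z)} (in particular the second set is also nonempty); i.e., d_X = d_Z for the qudit bivariate bicycle code. -/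
/-
The monomials `x^a y^b`, hence `A` and `B`, are group-circulant matrices `M i j = f (i - j)` on
`G = ZMod ℓ × ZMod m`, so `M (-i) (-j) = M j i`: transposition is conjugation by `i ↦ -i`.
The weight-preserving linear bijection `(u, v) ↦ (v ∘ neg, -(u ∘ neg))` therefore carries
`ker H_Z` onto `ker H_X` and `rowspace H_X` onto `rowspace H_Z`, the relation
`γ₁δ₁ + γ₂δ₂ = 0` being exactly what makes the scalars match. It maps the Z-type logical
operators bijectively and weight-preservingly onto the X-type ones.
-/

open Matrix Kronecker

namespace Matrix

theorem kronecker_circulant {α m n : Type*} [Mul α] [Sub m] [Sub n] (v : m → α) (w : n → α) :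
    circulant v ⊗ₖ circulant w = circulant fun k : m × n => v k.1 * w k.2 :=
  rfl

theorem circulant_apply_neg_neg {α n : Type*} [AddCommGroup n] (v : n → α) (i j : n) :
    circulant v (-i) (-j) = circulant v j i :=
  congrArg v (neg_sub_neg i j)

def circulantSubalgebra (n R : Type*) [Fintype n] [DecidableEq n] [AddGroup n] [CommSemiring R] :
    Subalgebra R (Matrix n n R) where
  carrier := Set.range circulant
  mul_mem' := by
    rintro _ _ ⟨v, rfl⟩ ⟨w, rfl⟩
    exact ⟨_, (circulant_mul v w).symm⟩
  add_mem' := by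
    rintro _ _ ⟨v, rfl⟩ ⟨w, rfl⟩
    exact ⟨_, circulant_add v w⟩
  algebraMap_mem' r := ⟨Pi.single 0 r, by rw [circulant_single, algebraMap_eq_diagonal]; rfl⟩

theorem kronecker_mem_circulantSubalgebra {m n R : Type*} [Fintype m] [DecidableEq m]
    [AddGroup m] [Fintype n] [DecidableEq n] [AddGroup n] [CommSemiring R]
    {M : Matrix m m R} {N : Matrix n n R} (hM : M ∈ circulantSubalgebra m R)
    (hN : N ∈ circulantSubalgebra n R) : M ⊗ₖ N ∈ circulantSubalgebra (m × n) R := by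
  obtain ⟨v, rfl⟩ := hM
  obtain ⟨w, rfl⟩ := hN
  exact ⟨_, (kronecker_circulant v w).symm⟩

theorem mem_circulantSubalgebra_of_mem_span_monomials {n R : Type*} [Fintype n] [DecidableEq n]
    [AddGroup n] [CommSemiring R] {x y M : Matrix n n R} (hx : x ∈ circulantSubalgebra n R)
    (hy : y ∈ circulantSubalgebra n R)
    (hM : M ∈ Submodule.span R {N : Matrix n n R | ∃ a b : ℕ, N = x ^ a * y ^ b}) :
    M ∈ circulantSubalgebra n R := by
  have monomials_le :
      {N : Matrix n n R | ∃ a b : ℕ, N = x ^ a * y ^ b} ⊆ circulantSubalgebra n R := by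
    rintro _ ⟨a, b, rfl⟩
    exact mul_mem (pow_mem hx a) (pow_mem hy b)
  exact (Submodule.span_le (p := (circulantSubalgebra n R).toSubmodule)).mpr monomials_le hM

theorem apply_neg_neg_of_mem_circulantSubalgebra {n R : Type*} [Fintype n] [DecidableEq n]
    [AddCommGroup n] [CommSemiring R] {M : Matrix n n R} (hM : M ∈ circulantSubalgebra n R)
    (i j : n) : M (-i) (-j) = M j i := by
  obtain ⟨v, rfl⟩ := hM
  exact circulant_apply_neg_neg v i j

end Matrix

theorem cyclicShift_mem_circulantSubalgebra (ℓ : ℕ) [NeZero ℓ] (R : Type*) [CommSemiring R] :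
    cyclicShift ℓ R ∈ circulantSubalgebra (ZMod ℓ) R :=
  ⟨_, (cyclicShift_eq_circulant ℓ R).symm⟩

section ReflectSwap

variable {n R : Type*} [InvolutiveNeg n] [CommRing R]

theorem Matrix.mulVec_comp_neg [Fintype n] {A : Matrix n n R}
    (hA : ∀ i j, A (-i) (-j) = A j i) (u : n → R) : A *ᵥ (u ∘ Neg.neg) = (Aᵀ *ᵥ u) ∘ Neg.neg := by
  ext i
  exact Fintype.sum_equiv (Equiv.neg n) _ _ fun j => by simp [hA]

def reflectSwap : (n ⊕ n → R) ≃ₗ[R] (n ⊕ n → R) where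
  toFun v := Sum.elim ((v ∘ Sum.inr) ∘ Neg.neg) (-((v ∘ Sum.inl) ∘ Neg.neg))
  invFun v := Sum.elim (-((v ∘ Sum.inr) ∘ Neg.neg)) ((v ∘ Sum.inl) ∘ Neg.neg)
  map_add' v w := by ext (i | i) <;> simp [add_comm]
  map_smul' c v := by ext (i | i) <;> simp
  left_inv v := by ext (i | i) <;> simp
  right_inv v := by ext (i | i) <;> simp

theorem reflectSwap_apply (v : n ⊕ n → R) :
    reflectSwap v = Sum.elim ((v ∘ Sum.inr) ∘ Neg.neg) (-((v ∘ Sum.inl) ∘ Neg.neg)) :=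
  rfl

theorem hammingNorm_reflectSwap [Fintype n] [DecidableEq R] (v : n ⊕ n → R) :
    hammingNorm (reflectSwap v) = hammingNorm v :=
  Finset.card_equiv ((Equiv.sumCongr (Equiv.neg n) (Equiv.neg n)).trans (Equiv.sumComm n n))
    (by rintro (i | i) <;> simp only [Finset.mem_filter_univ] <;> simp [reflectSwap_apply])

variable {A B : Matrix n n R} (hA : ∀ i j, A (-i) (-j) = A j i)
  (hB : ∀ i j, B (-i) (-j) = B j i) {γ₁ γ₂ δ₁ δ₂ : R} (hCSS : γ₁ * δ₁ + γ₂ * δ₂ = 0)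
include hA hB hCSS

theorem smul_reflectSwap_row (i : n) :
    δ₁ • reflectSwap (fromCols (γ₁ • A) (γ₂ • B) i) = γ₂ • fromCols (δ₁ • Bᵀ) (δ₂ • Aᵀ) (-i) := by
  have hA' (i j : n) : A i (-j) = A j (-i) := by simpa using hA (-i) j
  have hB' (i j : n) : B i (-j) = B j (-i) := by simpa using hB (-i) j
  ext (j | j) <;>
    simp only [reflectSwap_apply, Pi.smul_apply, Pi.neg_apply, Sum.elim_inl, Sum.elim_inr,
      Function.comp_apply, fromCols_apply_inl, fromCols_apply_inr, Matrix.smul_apply,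
      transpose_apply, smul_eq_mul, hA', hB']
  · ring
  · linear_combination -A j (-i) * hCSS

theorem smul_mulVec_reflectSwap [Fintype n] (v : n ⊕ n → R) :
    δ₂ • (fromCols (γ₁ • A) (γ₂ • B) *ᵥ reflectSwap v) =
      γ₁ • ((fromCols (δ₁ • Bᵀ) (δ₂ • Aᵀ) *ᵥ v) ∘ Neg.neg) := by
  rw [reflectSwap_apply, fromCols_mulVec_sumElim, fromCols_mulVec]
  simp only [smul_mulVec, mulVec_neg, mulVec_comp_neg hA, mulVec_comp_neg hB]
  ext i
  simp only [Pi.smul_apply, Pi.add_apply, Pi.neg_apply, Function.comp_apply, smul_eq_mul]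
  linear_combination -(Bᵀ *ᵥ v ∘ Sum.inl) (-i) * hCSS

end ReflectSwap

section ReflectSwapField

variable {n F : Type*} [InvolutiveNeg n] [Field F] {A B : Matrix n n F}
  (hA : ∀ i j, A (-i) (-j) = A j i) (hB : ∀ i j, B (-i) (-j) = B j i)
  {γ₁ γ₂ δ₁ δ₂ : F} (hCSS : γ₁ * δ₁ + γ₂ * δ₂ = 0)
include hA hB hCSS

theorem mulVec_reflectSwap_eq_zero_iff [Fintype n] (hγ₁ : γ₁ ≠ 0) (hδ₂ : δ₂ ≠ 0)
    (v : n ⊕ n → F) :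
    fromCols (γ₁ • A) (γ₂ • B) *ᵥ reflectSwap v = 0 ↔ fromCols (δ₁ • Bᵀ) (δ₂ • Aᵀ) *ᵥ v = 0 := by
  rw [← smul_eq_zero_iff_right hδ₂, smul_mulVec_reflectSwap hA hB hCSS,
    smul_eq_zero_iff_right hγ₁]
  exact (Equiv.neg n).surjective.injective_comp_right.eq_iff' rfl

theorem reflectSwap_mem_span_rows_iff (hγ₂ : γ₂ ≠ 0) (hδ₁ : δ₁ ≠ 0) (v : n ⊕ n → F) :
    reflectSwap v ∈ Submodule.span F (Set.range (fromCols (δ₁ • Bᵀ) (δ₂ • Aᵀ))) ↔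
      v ∈ Submodule.span F (Set.range (fromCols (γ₁ • A) (γ₂ • B))) := by
  set HX := fromCols (γ₁ • A) (γ₂ • B)
  set HZ := fromCols (δ₁ • Bᵀ) (δ₂ • Aᵀ)
  have hrow (i : n) (p : Submodule F (n ⊕ n → F)) : reflectSwap (HX i) ∈ p ↔ HZ (-i) ∈ p := by
    rw [← p.smul_mem_iff hδ₁, smul_reflectSwap_row hA hB hCSS, p.smul_mem_iff hγ₂]
  have hspan : Submodule.span F (Set.range HZ) =
      (Submodule.span F (Set.range HX)).map reflectSwap.toLinearMap := by
    rw [Submodule.map_span, LinearEquiv.coe_coe]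
    apply le_antisymm <;> rw [Submodule.span_le]
    · rintro _ ⟨i, rfl⟩
      simpa only [neg_neg, SetLike.mem_coe] using
        (hrow (-i) _).mp
          (Submodule.subset_span (Set.mem_image_of_mem _ (Set.mem_range_self (-i))))
    · rintro _ ⟨_, ⟨i, rfl⟩, rfl⟩
      exact (hrow i _).mpr (Submodule.subset_span (Set.mem_range_self (-i)))
  rw [hspan, Submodule.mem_map_equiv, LinearEquiv.symm_apply_apply]

end ReflectSwapField

theorem bb_dX_eq_dZ_general
    {F : Type*} [Field F] [DecidableEq F] (ℓ m : ℕ) [NeZero ℓ] [NeZero m]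
    (x y A B : Matrix (ZMod ℓ × ZMod m) (ZMod ℓ × ZMod m) F)
    (hx : x = cyclicShift ℓ F ⊗ₖ (1 : Matrix (ZMod m) (ZMod m) F))
    (hy : y = (1 : Matrix (ZMod ℓ) (ZMod ℓ) F) ⊗ₖ cyclicShift m F)
    (hA : A ∈ Submodule.span F {M : Matrix (ZMod ℓ × ZMod m) (ZMod ℓ × ZMod m) F |
        ∃ a b : ℕ, M = x ^ a * y ^ b})
    (hB : B ∈ Submodule.span F {M : Matrix (ZMod ℓ × ZMod m) (ZMod ℓ × ZMod m) F |
        ∃ a b : ℕ, M = x ^ a * y ^ b})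
    (γ₁ γ₂ δ₁ δ₂ : F) (hγ₁ : γ₁ ≠ 0) (hγ₂ : γ₂ ≠ 0) (hδ₁ : δ₁ ≠ 0) (hδ₂ : δ₂ ≠ 0)
    (hCSS : γ₁ * δ₁ + γ₂ * δ₂ = 0)
    (HX HZ : Matrix (ZMod ℓ × ZMod m) ((ZMod ℓ × ZMod m) ⊕ (ZMod ℓ × ZMod m)) F)
    (hHX : HX = fromCols (γ₁ • A) (γ₂ • B))
    (hHZ : HZ = fromCols (δ₁ • Bᵀ) (δ₂ • Aᵀ))
    (hne : ∃ v : ((ZMod ℓ × ZMod m) ⊕ (ZMod ℓ × ZMod m)) → F,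
      HZ.mulVec v = 0 ∧ v ∉ Submodule.span F (Set.range HX)) :
    (∃ v : ((ZMod ℓ × ZMod m) ⊕ (ZMod ℓ × ZMod m)) → F,
      HX.mulVec v = 0 ∧ v ∉ Submodule.span F (Set.range HZ)) ∧
    sInf {w : ℕ | ∃ v : ((ZMod ℓ × ZMod m) ⊕ (ZMod ℓ × ZMod m)) → F,
        HZ.mulVec v = 0 ∧ v ∉ Submodule.span F (Set.range HX) ∧ hammingNorm v = w} =
    sInf {w : ℕ | ∃ v : ((ZMod ℓ × ZMod m) ⊕ (ZMod ℓ × ZMod m)) → F,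
        HX.mulVec v = 0 ∧ v ∉ Submodule.span F (Set.range HZ) ∧ hammingNorm v = w} := by
  have hx' : x ∈ circulantSubalgebra _ F :=
    hx ▸ kronecker_mem_circulantSubalgebra (cyclicShift_mem_circulantSubalgebra ℓ F) (one_mem _)
  have hy' : y ∈ circulantSubalgebra _ F :=
    hy ▸ kronecker_mem_circulantSubalgebra (one_mem _) (cyclicShift_mem_circulantSubalgebra m F)
  have sA := apply_neg_neg_of_mem_circulantSubalgebra
    (mem_circulantSubalgebra_of_mem_span_monomials hx' hy' hA)
  have sB := apply_neg_neg_of_mem_circulantSubalgebra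
    (mem_circulantSubalgebra_of_mem_span_monomials hx' hy' hB)
  have logical_iff (v : (ZMod ℓ × ZMod m) ⊕ (ZMod ℓ × ZMod m) → F) :
      (HX *ᵥ reflectSwap v = 0 ∧ reflectSwap v ∉ Submodule.span F (Set.range HZ)) ↔
        (HZ *ᵥ v = 0 ∧ v ∉ Submodule.span F (Set.range HX)) := by
    rw [hHX, hHZ]
    exact and_congr (mulVec_reflectSwap_eq_zero_iff sA sB hCSS hγ₁ hδ₂ v)
      (not_congr (reflectSwap_mem_span_rows_iff sA sB hCSS hγ₂ hδ₁ v))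
  obtain ⟨v, hv⟩ := hne
  refine ⟨⟨reflectSwap v, (logical_iff v).mpr hv⟩, congrArg sInf (Set.ext fun w => ?_)⟩
  exact reflectSwap.toEquiv.exists_congr fun v => by
    rw [LinearEquiv.coe_toEquiv, hammingNorm_reflectSwap, ← and_assoc, ← and_assoc, logical_iff]

/-- for a qudit bivariate bicycle code with `γ₁δ₁ + γ₂δ₂ = 0`, if
`ker H_Z ⊄ rowspace H_X` then the set `ker H_X \ rowspace H_Z` is also nonempty and the
two minimum logical weights coincide: `d_X = d_Z`. -/
theorem bb_dX_eq_dZ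
    {F : Type*} [Field F] [Fintype F] [DecidableEq F] (ℓ m : ℕ) [NeZero ℓ] [NeZero m]
    (x y A B : Matrix (ZMod ℓ × ZMod m) (ZMod ℓ × ZMod m) F)
    (hx : x = cyclicShift ℓ F ⊗ₖ (1 : Matrix (ZMod m) (ZMod m) F))
    (hy : y = (1 : Matrix (ZMod ℓ) (ZMod ℓ) F) ⊗ₖ cyclicShift m F)
    (hA : A ∈ Submodule.span F {M : Matrix (ZMod ℓ × ZMod m) (ZMod ℓ × ZMod m) F |
        ∃ a b : ℕ, M = x ^ a * y ^ b})
    (hB : B ∈ Submodule.span F {M : Matrix (ZMod ℓ × ZMod m) (ZMod ℓ × ZMod m) F |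
        ∃ a b : ℕ, M = x ^ a * y ^ b})
    (γ₁ γ₂ δ₁ δ₂ : F) (hγ₁ : γ₁ ≠ 0) (hγ₂ : γ₂ ≠ 0) (hδ₁ : δ₁ ≠ 0) (hδ₂ : δ₂ ≠ 0)
    (hCSS : γ₁ * δ₁ + γ₂ * δ₂ = 0)
    (HX HZ : Matrix (ZMod ℓ × ZMod m) ((ZMod ℓ × ZMod m) ⊕ (ZMod ℓ × ZMod m)) F)
    (hHX : HX = fromCols (γ₁ • A) (γ₂ • B))
    (hHZ : HZ = fromCols (δ₁ • Bᵀ) (δ₂ • Aᵀ))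
    (hne : ∃ v : ((ZMod ℓ × ZMod m) ⊕ (ZMod ℓ × ZMod m)) → F,
      HZ.mulVec v = 0 ∧ v ∉ Submodule.span F (Set.range HX)) :
    (∃ v : ((ZMod ℓ × ZMod m) ⊕ (ZMod ℓ × ZMod m)) → F,
      HX.mulVec v = 0 ∧ v ∉ Submodule.span F (Set.range HZ)) ∧
    sInf {w : ℕ | ∃ v : ((ZMod ℓ × ZMod m) ⊕ (ZMod ℓ × ZMod m)) → F,
        HZ.mulVec v = 0 ∧ v ∉ Submodule.span F (Set.range HX) ∧ hammingNorm v = w} =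
    sInf {w : ℕ | ∃ v : ((ZMod ℓ × ZMod m) ⊕ (ZMod ℓ × ZMod m)) → F,
        HX.mulVec v = 0 ∧ v ∉ Submodule.span F (Set.range HZ) ∧ hammingNorm v = w} :=
  bb_dX_eq_dZ_general ℓ m x y A B hx hy hA hB γ₁ γ₂ δ₁ δ₂ hγ₁ hγ₂ hδ₁ hδ₂ hCSS HX HZ hHX hHZ hne
end

section
/- Let q be a prime power and ℓ, m ≥ 1 be integers such that ℓ, m, q are pairwise coprime. Set x = S_ℓ ⊗ I_m, y = I_ℓ ⊗ S_m, z = xy, and let a, b ∈ F_q[X] be polynomials. Put A = a(z), B = b(z), H_X = [A | B], H_Z = [Bᵀ | −Aᵀ], and let h = gcd(a, b, X^{ℓm} − 1) in F_q[X]. Then the code dimension satisfies k := 2ℓm − rank_{F_q}(H_X) − rank_{F_q}(H_Z) = 2 · deg(h). -/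
open Matrix Kronecker Polynomial

/-! Since `ℓ` and `m` are coprime, `z` is the translation by the generator `(1, 1)` of the
cyclic group `ZMod ℓ × ZMod m` of order `n = ℓm`. Hence `p ↦ p(z) e₀` identifies
`F[X] ⧸ (Xⁿ - 1)` with `Fⁿ`, turning `a(z)` and `b(z)` into multiplication by `a` and `b`, and the
column space of `H_X = [a(z) | b(z)]` becomes the image of the ideal `(a, b, Xⁿ - 1) = (h)`, of
dimension `n - deg h`. Transposing replaces `z` by the translation by `-(1, 1)`, another generator,
so `H_Z = [b(z⁻¹) | -a(z⁻¹)]` has the same rank. -/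

section PolynomialQuotient

variable {F V : Type*} [Field F] [AddCommGroup V] [Module F V]

theorem finrank_quotient_restrictScalars_span (f : F[X]) :
    Module.finrank F (F[X] ⧸ (Ideal.span {f}).restrictScalars F) = f.natDegree :=
  (Submodule.Quotient.restrictScalarsEquiv F _).finrank_eq.trans
    finrank_quotient_span_eq_natDegree

theorem finrank_range_of_ker_eq_span {Ψ : F[X] →ₗ[F] V} {g : F[X]}
    (hker : LinearMap.ker Ψ = (Ideal.span {g}).restrictScalars F) :
    Module.finrank F (LinearMap.range Ψ) = g.natDegree := by
  rw [← (LinearMap.quotKerEquivRange Ψ).finrank_eq, hker,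
    finrank_quotient_restrictScalars_span]

theorem ker_eq_span_of_surjective [FiniteDimensional F V] {Φ : F[X] →ₗ[F] V} {f : F[X]}
    (hf : f.Monic) (hle : (Ideal.span {f}).restrictScalars F ≤ LinearMap.ker Φ)
    (hsurj : Function.Surjective Φ) (hdim : Module.finrank F V = f.natDegree) :
    LinearMap.ker Φ = (Ideal.span {f}).restrictScalars F := by
  set P := (Ideal.span {f}).restrictScalars F
  have := hf.finite_quotient
  have : Module.Finite F (F[X] ⧸ P) :=
    Module.Finite.equiv (Submodule.Quotient.restrictScalarsEquiv F _).symm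
  have hinj : Function.Injective (P.liftQ Φ hle) := by
    rw [LinearMap.injective_iff_surjective_of_finrank_eq_finrank
      (by rw [finrank_quotient_restrictScalars_span, hdim]), ← LinearMap.range_eq_top,
      Submodule.range_liftQ, LinearMap.range_eq_top.2 hsurj]
  refine le_antisymm (fun p hp => ?_) hle
  rw [← Submodule.Quotient.mk_eq_zero P]
  exact hinj (by simpa using hp)

theorem finrank_range_comp_mulLeft_add_natDegree {Φ : F[X] →ₗ[F] V} {f c : F[X]} (hf : f ≠ 0)
    (hker : LinearMap.ker Φ = (Ideal.span {f}).restrictScalars F) (hc : c ∣ f) :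
    Module.finrank F (LinearMap.range (Φ ∘ₗ LinearMap.mulLeft F c)) + c.natDegree =
      f.natDegree := by
  obtain ⟨g, rfl⟩ := hc
  have hc0 : c ≠ 0 := left_ne_zero_of_mul hf
  rw [natDegree_mul hc0 (right_ne_zero_of_mul hf), add_comm]
  congr 1
  refine finrank_range_of_ker_eq_span (SetLike.ext fun p => ?_)
  rw [LinearMap.mem_ker, LinearMap.comp_apply, LinearMap.mulLeft_apply, ← LinearMap.mem_ker,
    hker, Submodule.restrictScalars_mem, Submodule.restrictScalars_mem,
    Ideal.mem_span_singleton, Ideal.mem_span_singleton, mul_dvd_mul_iff_left hc0]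

end PolynomialQuotient

section Orbit

variable {F ι : Type*} [Fintype ι] [DecidableEq ι]

noncomputable def orbitMap [CommSemiring F] (M : Matrix ι ι F) (e : ι → F) : F[X] →ₗ[F] ι → F where
  toFun p := aeval M p *ᵥ e
  map_add' p q := by rw [map_add, add_mulVec]
  map_smul' c p := by rw [map_smul, smul_mulVec]; rfl

variable {M : Matrix ι ι F} {e : ι → F}

theorem aeval_mulVec_orbitMap [CommSemiring F] (a p : F[X]) :
    aeval M a *ᵥ orbitMap M e p = orbitMap M e (a * p) := by
  simp only [orbitMap, LinearMap.coe_mk, AddHom.coe_mk, mulVec_mulVec, map_mul]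

theorem span_le_ker_orbitMap [CommSemiring F] {f : F[X]} (hf : aeval M f = 0) :
    (Ideal.span {f}).restrictScalars F ≤ LinearMap.ker (orbitMap M e) := by
  intro p hp
  obtain ⟨q, rfl⟩ := Ideal.mem_span_singleton.1 hp
  rw [LinearMap.mem_ker, ← aeval_mulVec_orbitMap, hf, zero_mulVec]

variable [Field F]

theorem ker_orbitMap {f : F[X]} (hsurj : Function.Surjective (orbitMap M e))
    (hf : aeval M f = 0) (hmonic : f.Monic) (hdeg : f.natDegree = Fintype.card ι) :
    LinearMap.ker (orbitMap M e) = (Ideal.span {f}).restrictScalars F :=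
  ker_eq_span_of_surjective hmonic (span_le_ker_orbitMap hf) hsurj
    (by rw [Module.finrank_fintype_fun_eq_card, hdeg])

theorem range_mulVecLin_fromCols_aeval {f a b h : F[X]}
    (hsurj : Function.Surjective (orbitMap M e)) (hf : aeval M f = 0)
    (hI : Ideal.span {a, b, f} = Ideal.span {h}) :
    LinearMap.range (fromCols (aeval M a) (aeval M b)).mulVecLin =
      LinearMap.range (orbitMap M e ∘ₗ LinearMap.mulLeft F h) := by
  have hspan (r : F[X]) : (∃ s, h * s = r) ↔ ∃ p q t, p * a + q * b + t * f = r := by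
    simp only [← smul_eq_mul, ← Submodule.mem_span_triple]
    rw [← Ideal.span, hI, Ideal.mem_span_singleton']
    simp only [smul_eq_mul, mul_comm]
  ext w
  simp only [LinearMap.mem_range, mulVecLin_apply, LinearMap.comp_apply, LinearMap.mulLeft_apply]
  constructor
  · rintro ⟨u, rfl⟩
    obtain ⟨p, hp⟩ := hsurj (u ∘ Sum.inl)
    obtain ⟨q, hq⟩ := hsurj (u ∘ Sum.inr)
    obtain ⟨s, hs⟩ := (hspan (a * p + b * q)).2 ⟨p, q, 0, by ring⟩
    refine ⟨s, ?_⟩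
    rw [fromCols_mulVec, ← hp, ← hq, aeval_mulVec_orbitMap, aeval_mulVec_orbitMap, ← map_add, hs]
  · rintro ⟨s, rfl⟩
    obtain ⟨p, q, t, hpqt⟩ := (hspan _).1 ⟨s, rfl⟩
    refine ⟨Sum.elim (orbitMap M e p) (orbitMap M e q), ?_⟩
    have hft : orbitMap M e (t * f) = 0 :=
      span_le_ker_orbitMap hf (Ideal.mul_mem_left _ _ (Ideal.mem_span_singleton_self f))
    rw [fromCols_mulVec_sumElim, aeval_mulVec_orbitMap, aeval_mulVec_orbitMap, ← hpqt, map_add,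
      map_add, hft, add_zero, mul_comm a, mul_comm b]

theorem rank_add_natDegree_fromCols_aeval {f a b h : F[X]}
    (hsurj : Function.Surjective (orbitMap M e)) (hf : aeval M f = 0) (hmonic : f.Monic)
    (hdeg : f.natDegree = Fintype.card ι)
    (hI : Ideal.span {a, b, f} = Ideal.span {h}) :
    (fromCols (aeval M a) (aeval M b)).rank + h.natDegree = f.natDegree := by
  have hhf : h ∣ f := Ideal.mem_span_singleton.1 (hI ▸ Ideal.subset_span (by simp))
  rw [Matrix.rank, range_mulVecLin_fromCols_aeval hsurj hf hI]
  exact finrank_range_comp_mulLeft_add_natDegree hmonic.ne_zero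
    (ker_orbitMap hsurj hf hmonic hdeg) hhf

end Orbit

section Shift

variable {F G : Type*} [AddCommGroup G] [DecidableEq G]

def shiftMatrix [Zero F] [One F] (g : G) : Matrix G G F :=
  fun i j => if j = i + g then 1 else 0

theorem cyclicShift_eq_shiftMatrix (ℓ : ℕ) [NeZero ℓ] [Zero F] [One F] :
    cyclicShift ℓ F = shiftMatrix 1 :=
  rfl

theorem transpose_shiftMatrix [Zero F] [One F] (g : G) :
    (shiftMatrix g : Matrix G G F)ᵀ = shiftMatrix (-g) := by
  ext i j
  simp only [shiftMatrix, transpose_apply, eq_add_neg_iff_add_eq, eq_comm]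

theorem shiftMatrix_kronecker [MulZeroOneClass F] {G' : Type*} [AddCommGroup G'] [DecidableEq G']
    (g : G) (g' : G') :
    (shiftMatrix g : Matrix G G F) ⊗ₖ shiftMatrix g' = shiftMatrix (g, g') := by
  ext ⟨i, i'⟩ ⟨j, j'⟩
  simp only [kroneckerMap_apply, shiftMatrix, Prod.mk_add_mk, Prod.mk.injEq]
  split_ifs <;> simp_all

theorem shiftMatrix_zero [NonAssocSemiring F] : (shiftMatrix (0 : G) : Matrix G G F) = 1 := by
  ext i j
  simp [shiftMatrix, one_apply, eq_comm]

variable [Fintype G]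

theorem shiftMatrix_add [NonAssocSemiring F] (g g' : G) :
    (shiftMatrix (g + g') : Matrix G G F) = shiftMatrix g * shiftMatrix g' := by
  ext i j
  simp only [shiftMatrix, mul_apply, mul_ite, mul_one, mul_zero]
  rw [Finset.sum_eq_single (i + g)] <;> simp +contextual [add_assoc]

theorem shiftMatrix_nsmul [Semiring F] (k : ℕ) (g : G) :
    (shiftMatrix (k • g) : Matrix G G F) = shiftMatrix g ^ k := by
  induction k with
  | zero => rw [zero_smul, shiftMatrix_zero, pow_zero]
  | succ k ih => rw [succ_nsmul, shiftMatrix_add, ih, pow_succ]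

theorem shiftMatrix_mulVec_single [NonAssocSemiring F] (g i : G) :
    (shiftMatrix g : Matrix G G F) *ᵥ Pi.single i 1 = Pi.single (i - g) 1 := by
  ext j
  simp [shiftMatrix, Pi.single_apply, eq_sub_iff_add_eq, @eq_comm _ i]

theorem aeval_shiftMatrix_X_pow_card_sub_one [CommRing F] (g : G) :
    aeval (shiftMatrix g : Matrix G G F) (X ^ Fintype.card G - 1 : F[X]) = 0 := by
  rw [map_sub, map_pow, aeval_X, map_one, ← shiftMatrix_nsmul, card_nsmul_eq_zero,
    shiftMatrix_zero, sub_self]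

theorem orbitMap_shiftMatrix_X_pow [CommSemiring F] (g : G) (k : ℕ) :
    orbitMap (shiftMatrix g : Matrix G G F) (Pi.single 0 1) (X ^ k) = Pi.single (-(k • g)) 1 := by
  rw [orbitMap, LinearMap.coe_mk, AddHom.coe_mk, map_pow, aeval_X, ← shiftMatrix_nsmul,
    shiftMatrix_mulVec_single, zero_sub]

theorem orbitMap_shiftMatrix_surjective [CommSemiring F] {g : G}
    (hg : ∀ i : G, ∃ k : ℕ, k • g = i) :
    Function.Surjective (orbitMap (shiftMatrix g : Matrix G G F) (Pi.single 0 1)) := by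
  rw [← LinearMap.range_eq_top, eq_top_iff, ← (Pi.basisFun F G).span_eq, Submodule.span_le]
  rintro _ ⟨i, rfl⟩
  obtain ⟨k, hk⟩ := hg (-i)
  exact ⟨X ^ k, by rw [orbitMap_shiftMatrix_X_pow, hk, neg_neg, Pi.basisFun_apply]⟩

theorem rank_add_natDegree_fromCols_aeval_shiftMatrix [Field F] {g : G}
    (hg : ∀ i : G, ∃ k : ℕ, k • g = i) {a b h : F[X]} (hI : Ideal.span {a, b, X ^ Fintype.card G - 1} = Ideal.span {h}) :
    (fromCols (aeval (shiftMatrix g : Matrix G G F) a) (aeval (shiftMatrix g) b)).rank +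
      h.natDegree = Fintype.card G := by
  have hmonic : (X ^ Fintype.card G - 1 : F[X]).Monic := by
    simpa using monic_X_pow_sub_C (1 : F) Fintype.card_ne_zero
  have hdeg : (X ^ Fintype.card G - 1 : F[X]).natDegree = Fintype.card G := by
    simpa using natDegree_X_pow_sub_C (n := Fintype.card G) (r := (1 : F))
  rw [rank_add_natDegree_fromCols_aeval (orbitMap_shiftMatrix_surjective hg)
    (aeval_shiftMatrix_X_pow_card_sub_one g) hmonic hdeg hI, hdeg]

end Shift

theorem Matrix.transpose_aeval {F n : Type*} [CommSemiring F] [Fintype n] [DecidableEq n]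
    (M : Matrix n n F) (p : F[X]) : (aeval M p)ᵀ = aeval Mᵀ p := by
  induction p using Polynomial.induction_on' with
  | add p q hp hq => rw [map_add, map_add, transpose_add, hp, hq]
  | monomial k r => rw [aeval_monomial, aeval_monomial, ← Algebra.smul_def, ← Algebra.smul_def,
      transpose_smul, transpose_pow]

theorem ZMod.exists_nsmul_one_eq_of_coprime {ℓ m : ℕ} [NeZero ℓ] [NeZero m] (hlm : ℓ.Coprime m)
    (i : ZMod ℓ × ZMod m) : ∃ k : ℕ, k • (1 : ZMod ℓ × ZMod m) = i := by
  refine ⟨((ZMod.chineseRemainder hlm).symm i).val, ?_⟩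
  rw [nsmul_one, ← map_natCast (ZMod.chineseRemainder hlm), ZMod.natCast_zmod_val,
    RingEquiv.apply_symm_apply]

theorem coprime_bb_code_dimension_general
    {F : Type*} [Field F] [DecidableEq F] (ℓ m : ℕ) [NeZero ℓ] [NeZero m]
    (hlm : Nat.Coprime ℓ m)
    (x y z : Matrix (ZMod ℓ × ZMod m) (ZMod ℓ × ZMod m) F)
    (hx : x = cyclicShift ℓ F ⊗ₖ (1 : Matrix (ZMod m) (ZMod m) F))
    (hy : y = (1 : Matrix (ZMod ℓ) (ZMod ℓ) F) ⊗ₖ cyclicShift m F)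
    (hz : z = x * y)
    (a b : Polynomial F)
    (A B : Matrix (ZMod ℓ × ZMod m) (ZMod ℓ × ZMod m) F)
    (hA : A = Polynomial.aeval z a) (hB : B = Polynomial.aeval z b)
    (HX HZ : Matrix (ZMod ℓ × ZMod m) ((ZMod ℓ × ZMod m) ⊕ (ZMod ℓ × ZMod m)) F)
    (hHX : HX = fromCols A B)
    (hHZ : HZ = fromCols Bᵀ (-Aᵀ))
    (h : Polynomial F)
    (hgcd : h = EuclideanDomain.gcd a (EuclideanDomain.gcd b (X ^ (ℓ * m) - 1))) :
    (2 * (ℓ * m) : ℤ) - HX.rank - HZ.rank = 2 * h.natDegree := by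
  have hcard : Fintype.card (ZMod ℓ × ZMod m) = ℓ * m := by simp [ZMod.card]
  have hz_shift : z = shiftMatrix 1 := by
    rw [hz, hx, hy, ← mul_kronecker_mul, Matrix.mul_one, Matrix.one_mul,
      cyclicShift_eq_shiftMatrix, cyclicShift_eq_shiftMatrix, shiftMatrix_kronecker]
    rfl
  have hgen := ZMod.exists_nsmul_one_eq_of_coprime hlm
  have hgen' (i : ZMod ℓ × ZMod m) : ∃ k : ℕ, k • (-1 : ZMod ℓ × ZMod m) = i :=
    (hgen (-i)).imp fun k hk => by rw [smul_neg, hk, neg_neg]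
  have hI : Ideal.span {a, b, X ^ Fintype.card (ZMod ℓ × ZMod m) - 1} = Ideal.span {h} := by
    rw [hgcd, hcard, EuclideanDomain.span_gcd, Ideal.span_insert a, Ideal.span_insert a,
      EuclideanDomain.span_gcd]
  have hI' : Ideal.span {b, -a, X ^ Fintype.card (ZMod ℓ × ZMod m) - 1} = Ideal.span {h} := by
    rw [Ideal.span_insert, Ideal.span_insert_neg, ← Ideal.span_insert, Set.insert_comm, hI]
  have hX := rank_add_natDegree_fromCols_aeval_shiftMatrix hgen hI
  have hZ := rank_add_natDegree_fromCols_aeval_shiftMatrix hgen' hI'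
  rw [map_neg, ← transpose_shiftMatrix, ← transpose_aeval, ← transpose_aeval, ← hz_shift, ← hA,
    ← hB, ← hHZ] at hZ
  rw [← hz_shift, ← hA, ← hB, ← hHX] at hX
  omega

/-- coprime qudit bivariate bicycle codes.  For `ℓ, m, q` pairwise coprime,
`z = xy`, `A = a(z)`, `B = b(z)`, `H_X = [A | B]`, `H_Z = [Bᵀ | −Aᵀ]`, and
`h = gcd(a, b, X^{ℓm} − 1)`, the code dimension is
`k = 2ℓm − rank H_X − rank H_Z = 2 · deg h`. -/
theorem coprime_bb_code_dimension
    {F : Type*} [Field F] [Fintype F] [DecidableEq F] (ℓ m : ℕ) [NeZero ℓ] [NeZero m]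
    (hlm : Nat.Coprime ℓ m) (hlq : Nat.Coprime ℓ (Fintype.card F))
    (hmq : Nat.Coprime m (Fintype.card F))
    (x y z : Matrix (ZMod ℓ × ZMod m) (ZMod ℓ × ZMod m) F)
    (hx : x = cyclicShift ℓ F ⊗ₖ (1 : Matrix (ZMod m) (ZMod m) F))
    (hy : y = (1 : Matrix (ZMod ℓ) (ZMod ℓ) F) ⊗ₖ cyclicShift m F)
    (hz : z = x * y)
    (a b : Polynomial F)
    (A B : Matrix (ZMod ℓ × ZMod m) (ZMod ℓ × ZMod m) F)
    (hA : A = Polynomial.aeval z a) (hB : B = Polynomial.aeval z b)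
    (HX HZ : Matrix (ZMod ℓ × ZMod m) ((ZMod ℓ × ZMod m) ⊕ (ZMod ℓ × ZMod m)) F)
    (hHX : HX = fromCols A B)
    (hHZ : HZ = fromCols Bᵀ (-Aᵀ))
    (h : Polynomial F)
    (hgcd : h = EuclideanDomain.gcd a (EuclideanDomain.gcd b (X ^ (ℓ * m) - 1))) :
    (2 * (ℓ * m) : ℤ) - HX.rank - HZ.rank = 2 * h.natDegree :=
  coprime_bb_code_dimension_general ℓ m hlm x y z hx hy hz a b A B hA hB HX HZ hHX hHZ h hgcd
end

section
/- Let F_q be a finite field, H_A ∈ F_q^{m_A×n_A} and H_B ∈ F_q^{m_B×n_B} matrices with ranks r_A = rank(H_A) and r_B = rank(H_B). Define the hypergraph product parity-check matrices H_X = [I_{m_A} ⊗ H_B | H_A ⊗ I_{m_B}] and H_Z = [H_Aᵀ ⊗ I_{n_B} | −I_{n_A} ⊗ H_Bᵀ], acting on n = m_A·n_B + n_A·m_B coordinates. Then n − rank(H_X) − rank(H_Z) = (n_A − r_A)(m_B − r_B) + (m_A − r_A)(n_B − r_B); i.e., the qudit hypergraph product code encodes k = k_A·k_Bᵀ + k_Aᵀ·k_B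 logical qudits, where k_A = n_A − r_A, k_Aᵀ = m_A − r_A, k_B = n_B − r_B, k_Bᵀ = m_B − r_B. -/
open Matrix Kronecker Module

/-! The column space of `[I ⊗ B | A ⊗ I]` is the sum of those of `I ⊗ B` and `A ⊗ I`, and their
intersection is the column space of `A ⊗ B`. Since rank is multiplicative under `⊗`, this gives
`rank H_X = m_A r_B + r_A m_B - r_A r_B`. Up to a sign and the order of its blocks, `H_Z` is the
same construction for `H_Aᵀ, H_Bᵀ`, so `rank H_Z = n_A r_B + r_A n_B - r_A r_B`, and the count
follows. -/

-- Extend a section of `f` over its range to all of `W`.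
theorem LinearMap.exists_comp_comp_eq_self {K V W : Type*} [DivisionRing K] [AddCommGroup V]
    [Module K V] [AddCommGroup W] [Module K W] (f : V →ₗ[K] W) :
    ∃ g : W →ₗ[K] V, f ∘ₗ g ∘ₗ f = f := by
  obtain ⟨s, hs⟩ := f.rangeRestrict.exists_rightInverse_of_surjective f.range_rangeRestrict
  obtain ⟨g, hg⟩ := s.exists_extend
  refine ⟨g, LinearMap.ext fun x => ?_⟩
  have hgx : g (f x) = s ⟨f x, mem_range_self f x⟩ :=
    LinearMap.congr_fun hg ⟨f x, mem_range_self f x⟩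
  simp only [comp_apply, hgx]
  exact congr_arg Subtype.val (LinearMap.congr_fun hs ⟨f x, mem_range_self f x⟩)

theorem Matrix.exists_mul_mul_eq_self {K m n : Type*} [Field K] [Fintype m] [Fintype n]
    [DecidableEq m] [DecidableEq n] (A : Matrix m n K) : ∃ G : Matrix n m K, A * G * A = A := by
  obtain ⟨g, hg⟩ := (toLin' A).exists_comp_comp_eq_self
  refine ⟨LinearMap.toMatrix' g, toLin'.injective ?_⟩
  rwa [toLin'_mul, toLin'_mul, toLin'_toMatrix', LinearMap.comp_assoc]

theorem TensorProduct.finrank_range_map {K V W V' W' : Type*} [Field K] [AddCommGroup V]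
    [AddCommGroup W] [AddCommGroup V'] [AddCommGroup W'] [Module K V] [Module K W] [Module K V']
    [Module K W'] [FiniteDimensional K W] [FiniteDimensional K W'] (f : V →ₗ[K] W)
    (g : V' →ₗ[K] W') :
    finrank K (LinearMap.range (map f g)) =
      finrank K (LinearMap.range f) * finrank K (LinearMap.range g) := by
  rw [range_map, ← range_mapIncl,
    LinearMap.finrank_range_of_inj (Module.Flat.tensorProduct_mapIncl_injective_of_left _ _),
    finrank_tensorProduct]

theorem Matrix.rank_kronecker {K m n p q : Type*} [Field K] [Fintype m] [Fintype n] [Fintype p]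
    [Fintype q] [DecidableEq n] [DecidableEq q] (A : Matrix m n K) (B : Matrix p q K) :
    (A ⊗ₖ B).rank = A.rank * B.rank := by
  classical
  rw [rank_eq_finrank_range_toLin (A ⊗ₖ B) ((Pi.basisFun K m).tensorProduct (Pi.basisFun K p))
      ((Pi.basisFun K n).tensorProduct (Pi.basisFun K q)), toLin_kronecker,
    TensorProduct.finrank_range_map, ← rank_eq_finrank_range_toLin,
    ← rank_eq_finrank_range_toLin]

section FromCols

variable {R m n₁ n₂ : Type*} [Fintype n₁] [Fintype n₂]

theorem Matrix.range_mulVecLin_fromCols [CommSemiring R] (C : Matrix m n₁ R) (D : Matrix m n₂ R) :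
    LinearMap.range (fromCols C D).mulVecLin =
      LinearMap.range C.mulVecLin ⊔ LinearMap.range D.mulVecLin := by
  simp only [range_mulVecLin, ← Submodule.span_union]
  congr
  ext v
  constructor
  · rintro ⟨j | j, rfl⟩
    exacts [Or.inl ⟨j, rfl⟩, Or.inr ⟨j, rfl⟩]
  · rintro (⟨j, rfl⟩ | ⟨j, rfl⟩)
    exacts [⟨Sum.inl j, rfl⟩, ⟨Sum.inr j, rfl⟩]

theorem Matrix.rank_fromCols_comm_s6 [CommSemiring R] (C : Matrix m n₁ R) (D : Matrix m n₂ R) :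
    (fromCols C D).rank = (fromCols D C).rank := by
  rw [rank, rank, range_mulVecLin_fromCols, range_mulVecLin_fromCols, sup_comm]

theorem Matrix.rank_fromCols_neg_right [CommRing R] (C : Matrix m n₁ R) (D : Matrix m n₂ R) :
    (fromCols C (-D)).rank = (fromCols C D).rank := by
  have hneg : (-D).mulVecLin = -D.mulVecLin := LinearMap.ext fun x => neg_mulVec x D
  rw [rank, rank, range_mulVecLin_fromCols, range_mulVecLin_fromCols, hneg, LinearMap.range_neg]

end FromCols

section Kronecker

variable {K mA nA mB nB : Type*} [Field K] [Fintype mA] [Fintype nA] [Fintype mB] [Fintype nB]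
  [DecidableEq mA] [DecidableEq nA] [DecidableEq mB] [DecidableEq nB]

theorem Matrix.range_mulVecLin_one_kronecker_inf_kronecker_one (A : Matrix mA nA K)
    (B : Matrix mB nB K) :
    LinearMap.range ((1 : Matrix mA mA K) ⊗ₖ B).mulVecLin ⊓
        LinearMap.range (A ⊗ₖ (1 : Matrix mB mB K)).mulVecLin =
      LinearMap.range (A ⊗ₖ B).mulVecLin := by
  apply le_antisymm
  · rintro v ⟨⟨x, rfl⟩, ⟨y, hy⟩⟩
    obtain ⟨G, hG⟩ := A.exists_mul_mul_eq_self
    obtain ⟨H, hH⟩ := B.exists_mul_mul_eq_self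
    simp only [mulVecLin_apply] at hy ⊢
    -- `(A G ⊗ 1)` fixes the range of `A ⊗ 1` and `(1 ⊗ B H)` fixes the range of `1 ⊗ B`.
    have hfixB : ((1 : Matrix mA mA K) ⊗ₖ (B * H)) *ᵥ ((1 ⊗ₖ B) *ᵥ x) = (1 ⊗ₖ B) *ᵥ x := by
      rw [mulVec_mulVec, ← mul_kronecker_mul, Matrix.one_mul, hH]
    have hfixA : ((A * G) ⊗ₖ (1 : Matrix mB mB K)) *ᵥ ((A ⊗ₖ 1) *ᵥ y) = (A ⊗ₖ 1) *ᵥ y := by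
      rw [mulVec_mulVec, ← mul_kronecker_mul, Matrix.one_mul, hG]
    refine ⟨(G ⊗ₖ H) *ᵥ ((1 ⊗ₖ B) *ᵥ x), ?_⟩
    calc (A ⊗ₖ B) *ᵥ (G ⊗ₖ H) *ᵥ ((1 ⊗ₖ B) *ᵥ x)
        = (((A * G) ⊗ₖ 1) * (1 ⊗ₖ (B * H))) *ᵥ ((1 ⊗ₖ B) *ᵥ x) := by
          rw [mulVec_mulVec, ← mul_kronecker_mul, ← mul_kronecker_mul, Matrix.mul_one,
            Matrix.one_mul]
      _ = (1 ⊗ₖ B) *ᵥ x := by rw [← mulVec_mulVec, hfixB, ← hy, hfixA]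
  · have hAB : A ⊗ₖ B = ((1 : Matrix mA mA K) ⊗ₖ B) * (A ⊗ₖ (1 : Matrix nB nB K)) := by
      rw [← mul_kronecker_mul, Matrix.one_mul, Matrix.mul_one]
    have hBA : A ⊗ₖ B = (A ⊗ₖ (1 : Matrix mB mB K)) * ((1 : Matrix nA nA K) ⊗ₖ B) := by
      rw [← mul_kronecker_mul, Matrix.one_mul, Matrix.mul_one]
    refine le_inf ?_ ?_
    · rw [hAB, mulVecLin_mul]
      exact LinearMap.range_comp_le_range _ _
    · rw [hBA, mulVecLin_mul]
      exact LinearMap.range_comp_le_range _ _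

theorem Matrix.rank_fromCols_one_kronecker_kronecker_one (A : Matrix mA nA K)
    (B : Matrix mB nB K) :
    (fromCols ((1 : Matrix mA mA K) ⊗ₖ B) (A ⊗ₖ (1 : Matrix mB mB K))).rank + A.rank * B.rank =
      Fintype.card mA * B.rank + A.rank * Fintype.card mB := by
  have h : (fromCols ((1 : Matrix mA mA K) ⊗ₖ B) (A ⊗ₖ (1 : Matrix mB mB K))).rank
      + (A ⊗ₖ B).rank = ((1 : Matrix mA mA K) ⊗ₖ B).rank + (A ⊗ₖ (1 : Matrix mB mB K)).rank := by
    have := Submodule.finrank_sup_add_finrank_inf_eq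
      (LinearMap.range ((1 : Matrix mA mA K) ⊗ₖ B).mulVecLin)
      (LinearMap.range (A ⊗ₖ (1 : Matrix mB mB K)).mulVecLin)
    rwa [range_mulVecLin_one_kronecker_inf_kronecker_one, ← range_mulVecLin_fromCols] at this
  rwa [rank_kronecker, rank_kronecker, rank_kronecker, rank_one, rank_one] at h

end Kronecker

theorem hgp_code_dimension_general
    {F : Type*} [Field F] (mA nA mB nB : ℕ)
    (HA : Matrix (Fin mA) (Fin nA) F) (HB : Matrix (Fin mB) (Fin nB) F)
    (HX : Matrix (Fin mA × Fin mB) ((Fin mA × Fin nB) ⊕ (Fin nA × Fin mB)) F)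
    (HZ : Matrix (Fin nA × Fin nB) ((Fin mA × Fin nB) ⊕ (Fin nA × Fin mB)) F)
    (hHX : HX = fromCols ((1 : Matrix (Fin mA) (Fin mA) F) ⊗ₖ HB)
        (HA ⊗ₖ (1 : Matrix (Fin mB) (Fin mB) F)))
    (hHZ : HZ = fromCols (HAᵀ ⊗ₖ (1 : Matrix (Fin nB) (Fin nB) F))
        (-((1 : Matrix (Fin nA) (Fin nA) F) ⊗ₖ HBᵀ))) :
    ((mA * nB + nA * mB : ℕ) : ℤ) - HX.rank - HZ.rank =
      ((nA : ℤ) - HA.rank) * ((mB : ℤ) - HB.rank) +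
        ((mA : ℤ) - HA.rank) * ((nB : ℤ) - HB.rank) := by
  have hX : HX.rank + HA.rank * HB.rank = mA * HB.rank + HA.rank * mB := by
    rw [hHX]
    simpa only [Fintype.card_fin] using rank_fromCols_one_kronecker_kronecker_one HA HB
  have hZ : HZ.rank + HA.rank * HB.rank = nA * HB.rank + HA.rank * nB := by
    rw [hHZ, rank_fromCols_neg_right, rank_fromCols_comm_s6]
    simpa only [rank_transpose, Fintype.card_fin] using
      rank_fromCols_one_kronecker_kronecker_one HAᵀ HBᵀ
  zify at hX hZ
  push_cast
  linear_combination -hX - hZ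

/-- the qudit hypergraph product code built from `H_A ∈ F_q^{m_A×n_A}` and
`H_B ∈ F_q^{m_B×n_B}` with `H_X = [I_{m_A} ⊗ H_B | H_A ⊗ I_{m_B}]` and
`H_Z = [H_Aᵀ ⊗ I_{n_B} | −I_{n_A} ⊗ H_Bᵀ]` on `n = m_A n_B + n_A m_B` coordinates
encodes `k = (n_A − r_A)(m_B − r_B) + (m_A − r_A)(n_B − r_B)` logical qudits, where
`r_A = rank H_A`, `r_B = rank H_B`. -/
theorem hgp_code_dimension
    {F : Type*} [Field F] [Fintype F] (mA nA mB nB : ℕ)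
    (HA : Matrix (Fin mA) (Fin nA) F) (HB : Matrix (Fin mB) (Fin nB) F)
    (HX : Matrix (Fin mA × Fin mB) ((Fin mA × Fin nB) ⊕ (Fin nA × Fin mB)) F)
    (HZ : Matrix (Fin nA × Fin nB) ((Fin mA × Fin nB) ⊕ (Fin nA × Fin mB)) F)
    (hHX : HX = fromCols ((1 : Matrix (Fin mA) (Fin mA) F) ⊗ₖ HB)
        (HA ⊗ₖ (1 : Matrix (Fin mB) (Fin mB) F)))
    (hHZ : HZ = fromCols (HAᵀ ⊗ₖ (1 : Matrix (Fin nB) (Fin nB) F))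
        (-((1 : Matrix (Fin nA) (Fin nA) F) ⊗ₖ HBᵀ))) :
    ((mA * nB + nA * mB : ℕ) : ℤ) - HX.rank - HZ.rank =
      ((nA : ℤ) - HA.rank) * ((mB : ℤ) - HB.rank) +
        ((mA : ℤ) - HA.rank) * ((nB : ℤ) - HB.rank) :=
  hgp_code_dimension_general mA nA mB nB HA HB HX HZ hHX hHZ
end

section
/- Let F_q be a finite field, H_A ∈ F_q^{m_A×n_A}, H_B ∈ F_q^{m_B×n_B} with ker H_A ≠ 0, ker H_B ≠ 0, ker H_Aᵀ ≠ 0, ker H_Bᵀ ≠ 0, and let H_X = [I_{m_A} ⊗ H_B | H_A ⊗ I_{m_B}], H_Z = [H_Aᵀ ⊗ I_{n_B} | −I_{n_A} ⊗ H_Bᵀ]. Set d_A = min{wt(v) : v ∈ ker H_A, v ≠ 0}, d_Aᵀ = min{wt(v) : v ∈ ker H_Aᵀ, v ≠ 0}, and similarly d_B, d_Bᵀ. Then: (1) every w ∈ ker H_X with wt(w) < min{d_A, d_B} lies in rowspace(H_Z); and (2) every w ∈ ker H_Z with wt(w) < min{d_Aᵀ, d_Bᵀ} lies in rowspace(H_X).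 Consequently, the distance of the qudit hypergraph product code satisfies d ≥ min{d_A, d_Aᵀ, d_B, d_Bᵀ}. -/
open Matrix Kronecker

/-!
Write a physical vector as `w = (vec X, vec Y)`. By `(B ⊗ A) vec X = vec (A X Bᵀ)`, the condition
`H_X w = 0` reads `H_B X = -Y H_Aᵀ`, and the rows of `H_Z` span exactly the vectors
`(vec (C H_Aᵀ), -vec (H_B C))`. Every vector in the column space of `X` has weight at most
`wt w < d_B`, so `H_B` is injective there and has a left inverse `L` on it; likewise `H_A` has a
left inverse `R` on the row space of `Y`. Then `C = L (-Y) = X Rᵀ` satisfies `H_B C = -Y` and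
`C H_Aᵀ = X`. Part (2) is the same argument for `H_Z w = 0`, i.e. `H_Bᵀ Y = X H_A`.
-/

open Finset in
theorem hammingNorm_le_hammingNorm_of_subset_image {ι κ β γ : Type*} [Fintype ι] [Fintype κ]
    [Zero β] [Zero γ] [DecidableEq β] [DecidableEq γ] {v : ι → β} {f : κ → γ} (π : κ → ι)
    (h : ∀ i, v i ≠ 0 → ∃ k, f k ≠ 0 ∧ π k = i) : hammingNorm v ≤ hammingNorm f := by
  classical
  calc hammingNorm v ≤ #(({k | f k ≠ 0} : Finset κ).image π) :=
        card_le_card fun i hi => by simpa using h i (mem_filter.mp hi).2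
    _ ≤ hammingNorm f := card_image_le

open Finset in
theorem hammingNorm_sumElim {ι κ β : Type*} [Fintype ι] [Fintype κ] [Zero β] [DecidableEq β]
    (f : ι → β) (g : κ → β) : hammingNorm (Sum.elim f g) = hammingNorm f + hammingNorm g := by
  simp only [hammingNorm, card_filter, Fintype.sum_sum_type, Sum.elim_inl, Sum.elim_inr]
  rfl

theorem hammingNorm_neg {ι β : Type*} [Fintype ι] [AddGroup β] [DecidableEq β] (x : ι → β) :
    hammingNorm (-x) = hammingNorm x := by
  simp [hammingNorm]

namespace Matrix

variable {m n p q R : Type*}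

theorem exists_eq_sumElim_vec (w : (m × n) ⊕ (p × q) → R) :
    ∃ (X : Matrix n m R) (Y : Matrix q p R), w = Sum.elim (vec X) (vec Y) :=
  ⟨of fun j i => w (.inl (i, j)), of fun j i => w (.inr (i, j)), by ext (_ | _) <;> rfl⟩

theorem vecMul_mem_span_range [Fintype m] [CommSemiring R] (c : m → R) (H : Matrix m n R) :
    c ᵥ* H ∈ Submodule.span R (Set.range H) :=
  range_vecMulLinear H ▸ LinearMap.mem_range_self H.vecMulLinear c

theorem exists_ne_zero_of_mulVec_apply_ne_zero [Fintype n] [NonUnitalNonAssocSemiring R]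
    {A : Matrix m n R} {x : n → R} {i : m} (h : (A *ᵥ x) i ≠ 0) : ∃ j, A i j ≠ 0 := by
  by_contra! hA
  simp [mulVec, dotProduct, hA] at h

section HammingNorm

variable [Fintype m] [Fintype n] [NonUnitalNonAssocSemiring R] [DecidableEq R]

theorem hammingNorm_mulVec_le_vec (A : Matrix m n R) (x : n → R) :
    hammingNorm (A *ᵥ x) ≤ hammingNorm (vec A) :=
  hammingNorm_le_hammingNorm_of_subset_image Prod.snd fun i hi =>
    let ⟨j, hj⟩ := exists_ne_zero_of_mulVec_apply_ne_zero hi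
    ⟨(j, i), hj, rfl⟩

theorem hammingNorm_transpose_mulVec_le_vec (A : Matrix m n R) (x : m → R) :
    hammingNorm (Aᵀ *ᵥ x) ≤ hammingNorm (vec A) :=
  hammingNorm_le_hammingNorm_of_subset_image Prod.fst fun j hj =>
    let ⟨i, hi⟩ := exists_ne_zero_of_mulVec_apply_ne_zero hj
    ⟨(j, i), hi, rfl⟩

end HammingNorm

section LeftInverse

variable {m' n' K : Type*} [Fintype m] [Fintype n] [Fintype m'] [Fintype n'] [Field K]

open LinearMap

theorem exists_mul_mul_eq_self_of_disjoint [Fintype p] {P : Matrix m n K} {N : Matrix n p K}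
    (h : Disjoint (ker P.mulVecLin) (range N.mulVecLin)) : ∃ L : Matrix n m K, L * P * N = N := by
  classical
  set U := range N.mulVecLin
  have hinj : ker (P.mulVecLin ∘ₗ U.subtype) = ⊥ :=
    ker_eq_bot'.mpr fun u hu => Subtype.ext (Submodule.disjoint_def.mp h u hu u.2)
  obtain ⟨g, hg⟩ := (P.mulVecLin ∘ₗ U.subtype).exists_leftInverse_of_injective hinj
  refine ⟨toMatrix' (U.subtype ∘ₗ g), toLin'.injective ?_⟩
  rw [toLin'_mul, toLin'_mul, toLin'_toMatrix']
  exact LinearMap.ext fun x =>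
    congrArg Subtype.val (LinearMap.congr_fun hg ⟨N *ᵥ x, mem_range_self _ x⟩)

theorem exists_mul_eq_and_mul_transpose_eq {P : Matrix m n K} {Q : Matrix m' n' K}
    {M : Matrix m n' K} {N : Matrix n m' K} (h : P * N = M * Qᵀ)
    (hP : Disjoint (ker P.mulVecLin) (range N.mulVecLin))
    (hQ : Disjoint (ker Q.mulVecLin) (range Mᵀ.mulVecLin)) :
    ∃ C : Matrix n n' K, P * C = M ∧ C * Qᵀ = N := by
  obtain ⟨L, hL⟩ := exists_mul_mul_eq_self_of_disjoint hP
  obtain ⟨R, hR⟩ := exists_mul_mul_eq_self_of_disjoint hQ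
  have hM : M * Qᵀ * Rᵀ = M := by
    simpa only [transpose_mul, transpose_transpose, Matrix.mul_assoc] using congrArg transpose hR
  refine ⟨L * M, ?_, ?_⟩
  · calc P * (L * M) = P * (L * P * N) * Rᵀ := by
          conv_lhs => rw [← hM, ← h]
          simp only [Matrix.mul_assoc]
      _ = M := by rw [hL, h, hM]
  · rw [Matrix.mul_assoc, ← h, ← Matrix.mul_assoc, hL]

end LeftInverse

end Matrix

section MinimumWeight

variable {R : Type*} [CommSemiring R] [DecidableEq R] {m n p : Type*} [Fintype n] [Fintype p]

open LinearMap

theorem disjoint_ker_mulVecLin_of_forall_hammingNorm_lt {P : Matrix m n R}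
    {V : Submodule R (n → R)}
    (hV : ∀ v ∈ V, hammingNorm v < sInf {w | ∃ v, P *ᵥ v = 0 ∧ v ≠ 0 ∧ hammingNorm v = w}) :
    Disjoint (ker P.mulVecLin) V :=
  Submodule.disjoint_def.mpr fun v hker hv => by
    by_contra hv0
    exact (hV v hv).not_ge (Nat.sInf_le ⟨v, hker, hv0, rfl⟩)

theorem disjoint_ker_range_of_hammingNorm_vec_lt {P : Matrix m n R} {N : Matrix n p R}
    (h : hammingNorm (vec N) < sInf {w | ∃ v, P *ᵥ v = 0 ∧ v ≠ 0 ∧ hammingNorm v = w}) :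
    Disjoint (ker P.mulVecLin) (range N.mulVecLin) :=
  disjoint_ker_mulVecLin_of_forall_hammingNorm_lt fun _ ⟨x, hx⟩ =>
    hx ▸ (hammingNorm_mulVec_le_vec N x).trans_lt h

theorem disjoint_ker_range_transpose_of_hammingNorm_vec_lt {P : Matrix m n R} {M : Matrix p n R}
    (h : hammingNorm (vec M) < sInf {w | ∃ v, P *ᵥ v = 0 ∧ v ≠ 0 ∧ hammingNorm v = w}) :
    Disjoint (ker P.mulVecLin) (range Mᵀ.mulVecLin) :=
  disjoint_ker_mulVecLin_of_forall_hammingNorm_lt fun _ ⟨x, hx⟩ =>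
    hx ▸ (hammingNorm_transpose_mulVec_le_vec M x).trans_lt h

end MinimumWeight

section HypergraphProduct

variable {mA nA mB nB R : Type*} [CommRing R] (HA : Matrix mA nA R) (HB : Matrix mB nB R)

def hypergraphProductX [DecidableEq mA] [DecidableEq mB] :
    Matrix (mA × mB) ((mA × nB) ⊕ (nA × mB)) R :=
  fromCols (1 ⊗ₖ HB) (HA ⊗ₖ 1)

def hypergraphProductZ [DecidableEq nA] [DecidableEq nB] :
    Matrix (nA × nB) ((mA × nB) ⊕ (nA × mB)) R :=
  fromCols (HAᵀ ⊗ₖ 1) (-(1 ⊗ₖ HBᵀ))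

theorem hypergraphProductX_mulVec [Fintype mA] [Fintype nA] [Fintype mB] [Fintype nB]
    [DecidableEq mA] [DecidableEq mB] (X : Matrix nB mA R) (Y : Matrix mB nA R) :
    hypergraphProductX HA HB *ᵥ Sum.elim (vec X) (vec Y) = vec (HB * X + Y * HAᵀ) := by
  simp [hypergraphProductX, kronecker_mulVec_vec]

theorem hypergraphProductZ_mulVec [Fintype mA] [Fintype nA] [Fintype mB] [Fintype nB]
    [DecidableEq nA] [DecidableEq nB] (X : Matrix nB mA R) (Y : Matrix mB nA R) :
    hypergraphProductZ HA HB *ᵥ Sum.elim (vec X) (vec Y) = vec (X * HA - HBᵀ * Y) := by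
  simp [hypergraphProductZ, kronecker_mulVec_vec, neg_mulVec, vec_neg, sub_eq_add_neg]

theorem vec_vecMul_hypergraphProductX [Fintype mA] [Fintype mB] [DecidableEq mA] [DecidableEq mB]
    (C : Matrix mB mA R) :
    vec C ᵥ* hypergraphProductX HA HB = Sum.elim (vec (HBᵀ * C)) (vec (C * HA)) := by
  simp [hypergraphProductX, vec_vecMul_kronecker]

theorem vec_vecMul_hypergraphProductZ [Fintype nA] [Fintype nB] [DecidableEq nA] [DecidableEq nB]
    (C : Matrix nB nA R) :
    vec C ᵥ* hypergraphProductZ HA HB = Sum.elim (vec (C * HAᵀ)) (vec (-(HB * C))) := by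
  simp [hypergraphProductZ, vec_vecMul_kronecker, vecMul_neg, vec_neg]

end HypergraphProduct

section HypergraphProductCode

variable {mA nA mB nB K : Type*} [Field K] [DecidableEq K]
  [Fintype mA] [Fintype nA] [Fintype mB] [Fintype nB]
  [DecidableEq mA] [DecidableEq nA] [DecidableEq mB] [DecidableEq nB]
  (HA : Matrix mA nA K) (HB : Matrix mB nB K)

theorem mem_span_range_hypergraphProductZ_of_mulVec_eq_zero
    {w : (mA × nB) ⊕ (nA × mB) → K} (hw : hypergraphProductX HA HB *ᵥ w = 0)
    (hA : hammingNorm w < sInf {d | ∃ v, HA *ᵥ v = 0 ∧ v ≠ 0 ∧ hammingNorm v = d})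
    (hB : hammingNorm w < sInf {d | ∃ v, HB *ᵥ v = 0 ∧ v ≠ 0 ∧ hammingNorm v = d}) :
    w ∈ Submodule.span K (Set.range (hypergraphProductZ HA HB)) := by
  obtain ⟨X, Y, rfl⟩ := exists_eq_sumElim_vec w
  rw [hypergraphProductX_mulVec, vec_eq_zero_iff, add_eq_zero_iff_eq_neg, ← Matrix.neg_mul] at hw
  rw [hammingNorm_sumElim] at hA hB
  obtain ⟨C, hC, hC'⟩ := exists_mul_eq_and_mul_transpose_eq hw
    (disjoint_ker_range_of_hammingNorm_vec_lt (by omega))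
    (disjoint_ker_range_transpose_of_hammingNorm_vec_lt (by rw [vec_neg, hammingNorm_neg]; omega))
  simpa [vec_vecMul_hypergraphProductZ, hC, hC'] using
    vecMul_mem_span_range (vec C) (hypergraphProductZ HA HB)

theorem mem_span_range_hypergraphProductX_of_mulVec_eq_zero
    {w : (mA × nB) ⊕ (nA × mB) → K} (hw : hypergraphProductZ HA HB *ᵥ w = 0)
    (hA : hammingNorm w < sInf {d | ∃ v, HAᵀ *ᵥ v = 0 ∧ v ≠ 0 ∧ hammingNorm v = d})
    (hB : hammingNorm w < sInf {d | ∃ v, HBᵀ *ᵥ v = 0 ∧ v ≠ 0 ∧ hammingNorm v = d}) :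
    w ∈ Submodule.span K (Set.range (hypergraphProductX HA HB)) := by
  obtain ⟨X, Y, rfl⟩ := exists_eq_sumElim_vec w
  rw [hypergraphProductZ_mulVec, vec_eq_zero_iff, sub_eq_zero, ← transpose_transpose HA] at hw
  rw [hammingNorm_sumElim] at hA hB
  obtain ⟨C, hC, hC'⟩ := exists_mul_eq_and_mul_transpose_eq hw.symm
    (disjoint_ker_range_of_hammingNorm_vec_lt (by omega))
    (disjoint_ker_range_transpose_of_hammingNorm_vec_lt (by omega))
  rw [transpose_transpose] at hC'
  simpa [vec_vecMul_hypergraphProductX, hC, hC'] using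
    vecMul_mem_span_range (vec C) (hypergraphProductX HA HB)

end HypergraphProductCode

theorem hgp_distance_lower_bound_general
    {F : Type*} [Field F] [DecidableEq F] (mA nA mB nB : ℕ)
    (HA : Matrix (Fin mA) (Fin nA) F) (HB : Matrix (Fin mB) (Fin nB) F)
    (HX : Matrix (Fin mA × Fin mB) ((Fin mA × Fin nB) ⊕ (Fin nA × Fin mB)) F)
    (HZ : Matrix (Fin nA × Fin nB) ((Fin mA × Fin nB) ⊕ (Fin nA × Fin mB)) F)
    (hHX : HX = fromCols ((1 : Matrix (Fin mA) (Fin mA) F) ⊗ₖ HB)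
        (HA ⊗ₖ (1 : Matrix (Fin mB) (Fin mB) F)))
    (hHZ : HZ = fromCols (HAᵀ ⊗ₖ (1 : Matrix (Fin nB) (Fin nB) F))
        (-((1 : Matrix (Fin nA) (Fin nA) F) ⊗ₖ HBᵀ)))
    (dA dB dAT dBT : ℕ)
    (hdA : dA = sInf {w : ℕ | ∃ v : Fin nA → F, HA.mulVec v = 0 ∧ v ≠ 0 ∧ hammingNorm v = w})
    (hdB : dB = sInf {w : ℕ | ∃ v : Fin nB → F, HB.mulVec v = 0 ∧ v ≠ 0 ∧ hammingNorm v = w})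
    (hdAT : dAT = sInf {w : ℕ | ∃ v : Fin mA → F, HAᵀ.mulVec v = 0 ∧ v ≠ 0 ∧ hammingNorm v = w})
    (hdBT : dBT = sInf {w : ℕ | ∃ v : Fin mB → F, HBᵀ.mulVec v = 0 ∧ v ≠ 0 ∧ hammingNorm v = w}) :
    (∀ w : ((Fin mA × Fin nB) ⊕ (Fin nA × Fin mB)) → F,
      HX.mulVec w = 0 → hammingNorm w < min dA dB →
        w ∈ Submodule.span F (Set.range HZ)) ∧
    (∀ w : ((Fin mA × Fin nB) ⊕ (Fin nA × Fin mB)) → F,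
      HZ.mulVec w = 0 → hammingNorm w < min dAT dBT →
        w ∈ Submodule.span F (Set.range HX)) := by
  subst hHX hHZ hdA hdB hdAT hdBT
  exact ⟨fun w hw hlt => mem_span_range_hypergraphProductZ_of_mulVec_eq_zero HA HB hw
      (lt_min_iff.mp hlt).1 (lt_min_iff.mp hlt).2,
    fun w hw hlt => mem_span_range_hypergraphProductX_of_mulVec_eq_zero HA HB hw
      (lt_min_iff.mp hlt).1 (lt_min_iff.mp hlt).2⟩

/-- lower bound on the distance of a qudit hypergraph product code.
With `d_A, d_Aᵀ, d_B, d_Bᵀ` the minimum weights of nonzero vectors in the kernels of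
`H_A, H_Aᵀ, H_B, H_Bᵀ`: (1) every `w ∈ ker H_X` with `wt w < min{d_A, d_B}` lies in
`rowspace H_Z`, and (2) every `w ∈ ker H_Z` with `wt w < min{d_Aᵀ, d_Bᵀ}` lies in
`rowspace H_X`; consequently `d ≥ min{d_A, d_Aᵀ, d_B, d_Bᵀ}`. -/
theorem hgp_distance_lower_bound
    {F : Type*} [Field F] [Fintype F] [DecidableEq F] (mA nA mB nB : ℕ)
    (HA : Matrix (Fin mA) (Fin nA) F) (HB : Matrix (Fin mB) (Fin nB) F)
    (hA : ∃ v : Fin nA → F, v ≠ 0 ∧ HA.mulVec v = 0)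
    (hB : ∃ v : Fin nB → F, v ≠ 0 ∧ HB.mulVec v = 0)
    (hAT : ∃ v : Fin mA → F, v ≠ 0 ∧ HAᵀ.mulVec v = 0)
    (hBT : ∃ v : Fin mB → F, v ≠ 0 ∧ HBᵀ.mulVec v = 0)
    (HX : Matrix (Fin mA × Fin mB) ((Fin mA × Fin nB) ⊕ (Fin nA × Fin mB)) F)
    (HZ : Matrix (Fin nA × Fin nB) ((Fin mA × Fin nB) ⊕ (Fin nA × Fin mB)) F)
    (hHX : HX = fromCols ((1 : Matrix (Fin mA) (Fin mA) F) ⊗ₖ HB)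
        (HA ⊗ₖ (1 : Matrix (Fin mB) (Fin mB) F)))
    (hHZ : HZ = fromCols (HAᵀ ⊗ₖ (1 : Matrix (Fin nB) (Fin nB) F))
        (-((1 : Matrix (Fin nA) (Fin nA) F) ⊗ₖ HBᵀ)))
    (dA dB dAT dBT : ℕ)
    (hdA : dA = sInf {w : ℕ | ∃ v : Fin nA → F, HA.mulVec v = 0 ∧ v ≠ 0 ∧ hammingNorm v = w})
    (hdB : dB = sInf {w : ℕ | ∃ v : Fin nB → F, HB.mulVec v = 0 ∧ v ≠ 0 ∧ hammingNorm v = w})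
    (hdAT : dAT = sInf {w : ℕ | ∃ v : Fin mA → F, HAᵀ.mulVec v = 0 ∧ v ≠ 0 ∧ hammingNorm v = w})
    (hdBT : dBT = sInf {w : ℕ | ∃ v : Fin mB → F, HBᵀ.mulVec v = 0 ∧ v ≠ 0 ∧ hammingNorm v = w}) :
    (∀ w : ((Fin mA × Fin nB) ⊕ (Fin nA × Fin mB)) → F,
      HX.mulVec w = 0 → hammingNorm w < min dA dB →
        w ∈ Submodule.span F (Set.range HZ)) ∧
    (∀ w : ((Fin mA × Fin nB) ⊕ (Fin nA × Fin mB)) → F,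
      HZ.mulVec w = 0 → hammingNorm w < min dAT dBT →
        w ∈ Submodule.span F (Set.range HX)) :=
  hgp_distance_lower_bound_general mA nA mB nB HA HB HX HZ hHX hHZ dA dB dAT dBT hdA hdB hdAT hdBT
end

section
/- Let F_q be a finite field, n > k ≥ 1 integers, and H ∈ F_q^{(n−k)×n} a matrix of full row rank n−k with ker H ≠ 0 (e.g., the parity-check matrix of a cyclic code of dimension k). Define the open-boundary La-cross parity-check matrices H_X = [I_n ⊗ H | Hᵀ ⊗ I_{n−k}] and H_Z = [H ⊗ I_n | −I_{n−k} ⊗ Hᵀ], acting on N = n² + (n−k)² coordinates. Then the resulting CSS code has N physical qudits, exactly k² logical qudits, i.e., N − rank(H_X) − rank(H_Z) = k², and its distance equals d = min{wt(v) : v ∈ ker H, v ≠ 0}, the minimum distance of the classical code with parity-check matrix H. -/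
/-!
Write a vector on the qudits as a pair of blocks `(V, W)`, with `V` an `n × n` and `W` an
`(n - k) × (n - k)` matrix. Then `H_Z v = H V - W H`, `H_X v = V Hᵀ + Hᵀ W`, and the row spaces
of `H_X` and `H_Z` consist of the pairs `(Λ H, H Λ)` and `(Hᵀ M, -M Hᵀ)`. Full row rank gives a
right inverse `B` of `H`, hence right inverses of both check matrices, whose ranks are therefore
`n (n - k)`; this leaves `k²` logical qudits.

If `H_Z v = 0` and `V` kills `ker H`, then `V = (V B) H` and `W = H (V B)`, so `v` lies in the row
space of `H_X`. Hence a logical `v` has some `c ∈ ker H` with `V c ≠ 0`, and `V c` is a nonzero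
codeword of `ker H` (as `H V c = W H c = 0`) of weight at most `wt v`. Conversely, a codeword `c`
with `c_j ≠ 0` yields the logical operator `(c e_jᵀ, 0)` of weight `wt c`. The `X` side is the
transposed argument.
-/

open Matrix Kronecker

theorem hammingNorm_le_of_forall_ne_zero {α β M : Type*} [Fintype α] [Fintype β] [Zero M]
    [DecidableEq M] {u : α → M} {v : β → M} (f : α → β)
    (h : ∀ b, v b ≠ 0 → ∃ a, u a ≠ 0 ∧ f a = b) : hammingNorm v ≤ hammingNorm u := by
  classical
  calc hammingNorm v ≤ ((Finset.univ.filter (u · ≠ 0)).image f).card := by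
        refine Finset.card_le_card fun b hb => ?_
        simpa using h b (Finset.mem_filter.mp hb).2
    _ ≤ hammingNorm u := Finset.card_image_le

theorem hammingNorm_comp_le_of_injective {α β M : Type*} [Fintype α] [Fintype β] [Zero M]
    [DecidableEq M] (v : β → M) {e : α → β} (he : Function.Injective e) :
    hammingNorm (v ∘ e) ≤ hammingNorm v :=
  Finset.card_le_card_of_injOn e (fun a ha => by simpa using ha) he.injOn

theorem Matrix.hammingNorm_mulVec_le {m n R : Type*} [Fintype m] [Fintype n]
    [NonUnitalNonAssocSemiring R] [DecidableEq R] (A : Matrix m n R) (c : n → R) :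
    hammingNorm (A *ᵥ c) ≤ hammingNorm (fun p : m × n => A p.1 p.2) :=
  hammingNorm_le_of_forall_ne_zero Prod.fst fun i hi => by
    obtain ⟨j, -, hj⟩ := Finset.exists_ne_zero_of_sum_ne_zero hi
    exact ⟨(i, j), left_ne_zero_of_mul hj, rfl⟩

theorem Matrix.hammingNorm_vecMul_le {m n R : Type*} [Fintype m] [Fintype n]
    [NonUnitalNonAssocSemiring R] [DecidableEq R] (A : Matrix m n R) (c : m → R) :
    hammingNorm (c ᵥ* A) ≤ hammingNorm (fun p : m × n => A p.1 p.2) :=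
  hammingNorm_le_of_forall_ne_zero Prod.snd fun j hj => by
    obtain ⟨i, -, hi⟩ := Finset.exists_ne_zero_of_sum_ne_zero hj
    exact ⟨(i, j), right_ne_zero_of_mul hi, rfl⟩

theorem Matrix.mul_mul_eq_self_of_ker_le {l m n R : Type*} [Fintype m] [Fintype n]
    [DecidableEq m] [CommRing R] {H : Matrix m n R} {B : Matrix n m R} (hB : H * B = 1)
    {V : Matrix l n R} (hV : ∀ c, H *ᵥ c = 0 → V *ᵥ c = 0) : V * B * H = V := by
  refine ext_iff_mulVec.mpr fun c => ?_
  have hker : H *ᵥ (c - B *ᵥ (H *ᵥ c)) = 0 := by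
    rw [mulVec_sub, mulVec_mulVec, hB, one_mulVec, sub_self]
  rw [← sub_eq_zero, ← mulVec_mulVec, ← mulVec_mulVec, ← mulVec_sub, ← neg_sub, mulVec_neg,
    hV _ hker, neg_zero]

theorem Matrix.rank_eq_card_of_mul_eq_one {m n R : Type*} [Fintype m] [Fintype n] [DecidableEq m]
    [CommRing R] [StrongRankCondition R] {A : Matrix m n R} {B : Matrix n m R} (h : A * B = 1) :
    A.rank = Fintype.card m :=
  le_antisymm A.rank_le_card_height <| calc
    Fintype.card m = (A * B).rank := by rw [h, rank_one]
    _ ≤ A.rank := rank_mul_le_left A B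

theorem Matrix.exists_mul_eq_one_of_rank_eq {m n K : Type*} [Fintype m] [Fintype n] [DecidableEq m]
    [Field K] {A : Matrix m n K} (h : A.rank = Fintype.card m) : ∃ B : Matrix n m K, A * B = 1 := by
  refine mulVec_surjective_iff_exists_right_inverse.mp fun y => ?_
  have htop : LinearMap.range A.mulVecLin = ⊤ :=
    Submodule.eq_top_of_finrank_eq (by rw [Module.finrank_fintype_fun_eq_card]; exact h)
  exact LinearMap.mem_range.mp (htop ▸ Submodule.mem_top : y ∈ LinearMap.range A.mulVecLin)

theorem Matrix.uncurry_eq_zero_iff {m n α : Type*} [Zero α] {A : Matrix m n α} :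
    (fun p : m × n => A p.1 p.2) = 0 ↔ A = 0 :=
  ⟨fun h => ext fun i j => congrFun h (i, j), fun h => h ▸ rfl⟩

theorem Matrix.mem_span_range_iff_exists_vecMul {m n R : Type*} [Fintype m] [CommSemiring R]
    (A : Matrix m n R) (v : n → R) : v ∈ Submodule.span R (Set.range A) ↔ ∃ x, x ᵥ* A = v := by
  change v ∈ Submodule.span R (Set.range A.row) ↔ _
  rw [← range_vecMulLinear, LinearMap.mem_range]
  rfl

theorem Nat.sInf_le_sInf_of_forall_exists_le {S T : Set ℕ} (hST : ∀ s ∈ S, ∃ t ∈ T, t ≤ s)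
    (hTS : ∀ t ∈ T, ∃ s ∈ S, s ≤ t) : sInf T ≤ sInf S := by
  rcases S.eq_empty_or_nonempty with rfl | hS
  · have hT : T = ∅ := Set.eq_empty_of_forall_notMem fun t ht => by
      obtain ⟨s, hs, -⟩ := hTS t ht
      exact hs
    simp [hT]
  · obtain ⟨t, ht, hts⟩ := hST _ (Nat.sInf_mem hS)
    exact (Nat.sInf_le ht).trans hts

theorem Nat.sInf_eq_of_forall_exists_le {S T : Set ℕ} (hST : ∀ s ∈ S, ∃ t ∈ T, t ≤ s)
    (hTS : ∀ t ∈ T, ∃ s ∈ S, s ≤ t) : sInf S = sInf T :=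
  le_antisymm (Nat.sInf_le_sInf_of_forall_exists_le hTS hST)
    (Nat.sInf_le_sInf_of_forall_exists_le hST hTS)

namespace LaCross

variable {R ι κ : Type*}

def ofBlocks (V : Matrix κ κ R) (W : Matrix ι ι R) : (κ × κ) ⊕ (ι × ι) → R :=
  Sum.elim (fun p => V p.1 p.2) (fun p => W p.1 p.2)

theorem ofBlocks_inj {V V' : Matrix κ κ R} {W W' : Matrix ι ι R} :
    ofBlocks V W = ofBlocks V' W' ↔ V = V' ∧ W = W' := by
  refine ⟨fun h => ⟨?_, ?_⟩, fun ⟨hV, hW⟩ => hV ▸ hW ▸ rfl⟩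
  · ext i j
    exact congrFun h (Sum.inl (i, j))
  · ext a b
    exact congrFun h (Sum.inr (a, b))

theorem exists_ofBlocks_eq (v : (κ × κ) ⊕ (ι × ι) → R) : ∃ V W, ofBlocks V W = v :=
  ⟨of fun i j => v (Sum.inl (i, j)), of fun a b => v (Sum.inr (a, b)), by ext (_ | _) <;> rfl⟩

theorem hammingNorm_uncurry_le_hammingNorm_ofBlocks [Fintype ι] [Fintype κ] [Zero R]
    [DecidableEq R] (V : Matrix κ κ R) (W : Matrix ι ι R) :
    hammingNorm (fun p : κ × κ => V p.1 p.2) ≤ hammingNorm (ofBlocks V W) :=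
  hammingNorm_comp_le_of_injective (ofBlocks V W) Sum.inl_injective

variable [CommRing R] [DecidableEq ι] [DecidableEq κ]

def checkX (H : Matrix ι κ R) : Matrix (κ × ι) ((κ × κ) ⊕ (ι × ι)) R :=
  fromCols ((1 : Matrix κ κ R) ⊗ₖ H) (Hᵀ ⊗ₖ (1 : Matrix ι ι R))

def checkZ (H : Matrix ι κ R) : Matrix (ι × κ) ((κ × κ) ⊕ (ι × ι)) R :=
  fromCols (H ⊗ₖ (1 : Matrix κ κ R)) (-((1 : Matrix ι ι R) ⊗ₖ Hᵀ))

variable [Fintype ι] [Fintype κ] {H : Matrix ι κ R}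

theorem checkX_mulVec_ofBlocks (V : Matrix κ κ R) (W : Matrix ι ι R) :
    checkX H *ᵥ ofBlocks V W = fun p => (V * Hᵀ + Hᵀ * W) p.1 p.2 := by
  ext ⟨i, a⟩
  simp [checkX, ofBlocks, mulVec, dotProduct, Fintype.sum_sum_type, Fintype.sum_prod_type,
    mul_apply, one_apply, mul_comm]

theorem checkZ_mulVec_ofBlocks (V : Matrix κ κ R) (W : Matrix ι ι R) :
    checkZ H *ᵥ ofBlocks V W = fun p => (H * V - W * H) p.1 p.2 := by
  ext ⟨b, j⟩
  simp [checkZ, ofBlocks, mulVec, dotProduct, Fintype.sum_sum_type, Fintype.sum_prod_type,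
    mul_apply, one_apply, mul_comm, sub_eq_add_neg]

theorem vecMul_checkX (Λ : Matrix κ ι R) :
    (fun p => Λ p.1 p.2) ᵥ* checkX H = ofBlocks (Λ * H) (H * Λ) := by
  ext (⟨l, m⟩ | ⟨b, c⟩)
  all_goals simp [checkX, ofBlocks, vecMul, dotProduct, Fintype.sum_prod_type,
    mul_apply, one_apply, mul_ite, mul_comm]

theorem vecMul_checkZ (M : Matrix ι κ R) :
    (fun p => M p.1 p.2) ᵥ* checkZ H = ofBlocks (Hᵀ * M) (-(M * Hᵀ)) := by
  ext (⟨l, m⟩ | ⟨c, d⟩)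
  all_goals simp [checkZ, ofBlocks, vecMul, dotProduct, Fintype.sum_prod_type,
    mul_apply, one_apply, mul_ite, mul_comm]

theorem checkX_mulVec_ofBlocks_eq_zero {V : Matrix κ κ R} {W : Matrix ι ι R} :
    checkX H *ᵥ ofBlocks V W = 0 ↔ V * Hᵀ + Hᵀ * W = 0 := by
  rw [checkX_mulVec_ofBlocks, uncurry_eq_zero_iff]

theorem checkZ_mulVec_ofBlocks_eq_zero {V : Matrix κ κ R} {W : Matrix ι ι R} :
    checkZ H *ᵥ ofBlocks V W = 0 ↔ H * V = W * H := by
  rw [checkZ_mulVec_ofBlocks, uncurry_eq_zero_iff, sub_eq_zero]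

theorem ofBlocks_mem_span_checkX_iff {V : Matrix κ κ R} {W : Matrix ι ι R} :
    ofBlocks V W ∈ Submodule.span R (Set.range (checkX H)) ↔
      ∃ Λ : Matrix κ ι R, Λ * H = V ∧ H * Λ = W := by
  rw [mem_span_range_iff_exists_vecMul]
  exact ⟨fun ⟨x, hx⟩ => ⟨of fun i j => x (i, j), ofBlocks_inj.mp ((vecMul_checkX _).symm.trans hx)⟩,
    fun ⟨Λ, hΛ⟩ => ⟨_, (vecMul_checkX Λ).trans (ofBlocks_inj.mpr hΛ)⟩⟩

theorem ofBlocks_mem_span_checkZ_iff {V : Matrix κ κ R} {W : Matrix ι ι R} :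
    ofBlocks V W ∈ Submodule.span R (Set.range (checkZ H)) ↔
      ∃ M : Matrix ι κ R, Hᵀ * M = V ∧ -(M * Hᵀ) = W := by
  rw [mem_span_range_iff_exists_vecMul]
  exact ⟨fun ⟨x, hx⟩ => ⟨of fun i j => x (i, j), ofBlocks_inj.mp ((vecMul_checkZ _).symm.trans hx)⟩,
    fun ⟨M, hM⟩ => ⟨_, (vecMul_checkZ M).trans (ofBlocks_inj.mpr hM)⟩⟩

theorem mulVec_eq_zero_of_ofBlocks_mem_span_checkX {V : Matrix κ κ R} {W : Matrix ι ι R}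
    (hv : ofBlocks V W ∈ Submodule.span R (Set.range (checkX H))) {c : κ → R}
    (hc : H *ᵥ c = 0) : V *ᵥ c = 0 := by
  obtain ⟨Λ, rfl, -⟩ := ofBlocks_mem_span_checkX_iff.mp hv
  rw [← mulVec_mulVec, hc, mulVec_zero]

theorem vecMul_eq_zero_of_ofBlocks_mem_span_checkZ {V : Matrix κ κ R} {W : Matrix ι ι R}
    (hv : ofBlocks V W ∈ Submodule.span R (Set.range (checkZ H))) {c : κ → R}
    (hc : H *ᵥ c = 0) : c ᵥ* V = 0 := by
  obtain ⟨M, rfl, -⟩ := ofBlocks_mem_span_checkZ_iff.mp hv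
  rw [← vecMul_vecMul, vecMul_transpose, hc, zero_vecMul]

theorem ofBlocks_mem_span_checkX {B : Matrix κ ι R} (hB : H * B = 1) {V : Matrix κ κ R}
    {W : Matrix ι ι R} (hVW : H * V = W * H) (hV : ∀ c, H *ᵥ c = 0 → V *ᵥ c = 0) :
    ofBlocks V W ∈ Submodule.span R (Set.range (checkX H)) :=
  ofBlocks_mem_span_checkX_iff.mpr ⟨V * B, mul_mul_eq_self_of_ker_le hB hV, by
    rw [← Matrix.mul_assoc, hVW, Matrix.mul_assoc, hB, Matrix.mul_one]⟩

theorem ofBlocks_mem_span_checkZ {B : Matrix κ ι R} (hB : H * B = 1) {V : Matrix κ κ R}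
    {W : Matrix ι ι R} (hVW : V * Hᵀ + Hᵀ * W = 0) (hV : ∀ c, H *ᵥ c = 0 → c ᵥ* V = 0) :
    ofBlocks V W ∈ Submodule.span R (Set.range (checkZ H)) := by
  have hVt : Vᵀ * B * H = Vᵀ :=
    mul_mul_eq_self_of_ker_le hB fun c hc => by rw [mulVec_transpose]; exact hV c hc
  have hBt : Bᵀ * Hᵀ = 1 := by rw [← transpose_mul, hB, transpose_one]
  refine ofBlocks_mem_span_checkZ_iff.mpr ⟨Bᵀ * V, ?_, ?_⟩
  · simpa [transpose_mul, Matrix.mul_assoc] using congrArg transpose hVt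
  · calc -(Bᵀ * V * Hᵀ) = Bᵀ * -(V * Hᵀ) := by rw [Matrix.mul_neg, Matrix.mul_assoc]
      _ = Bᵀ * (Hᵀ * W) := by rw [eq_neg_of_add_eq_zero_right hVW]
      _ = W := by rw [← Matrix.mul_assoc, hBt, Matrix.one_mul]

theorem rank_checkX [StrongRankCondition R] {B : Matrix κ ι R} (hB : H * B = 1) :
    (checkX H).rank = Fintype.card κ * Fintype.card ι := by
  rw [← Fintype.card_prod]
  refine rank_eq_card_of_mul_eq_one (B := fromRows ((1 : Matrix κ κ R) ⊗ₖ B) 0) ?_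
  rw [checkX, fromCols_mul_fromRows, Matrix.mul_zero, add_zero, ← mul_kronecker_mul, hB,
    Matrix.one_mul, one_kronecker_one]

theorem rank_checkZ [StrongRankCondition R] {B : Matrix κ ι R} (hB : H * B = 1) :
    (checkZ H).rank = Fintype.card ι * Fintype.card κ := by
  rw [← Fintype.card_prod]
  refine rank_eq_card_of_mul_eq_one (B := fromRows (B ⊗ₖ (1 : Matrix κ κ R)) 0) ?_
  rw [checkZ, fromCols_mul_fromRows, Matrix.mul_zero, add_zero, ← mul_kronecker_mul, hB,
    Matrix.one_mul, one_kronecker_one]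

variable [DecidableEq R]

theorem exists_ker_hammingNorm_le_of_mem_ker_checkZ {B : Matrix κ ι R} (hB : H * B = 1)
    {v : (κ × κ) ⊕ (ι × ι) → R} (hv : checkZ H *ᵥ v = 0)
    (hvX : v ∉ Submodule.span R (Set.range (checkX H))) :
    ∃ u, H *ᵥ u = 0 ∧ u ≠ 0 ∧ hammingNorm u ≤ hammingNorm v := by
  obtain ⟨V, W, rfl⟩ := exists_ofBlocks_eq v
  rw [checkZ_mulVec_ofBlocks_eq_zero] at hv
  obtain ⟨c, hc, hVc⟩ : ∃ c, H *ᵥ c = 0 ∧ V *ᵥ c ≠ 0 := by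
    by_contra! h
    exact hvX (ofBlocks_mem_span_checkX hB hv h)
  refine ⟨V *ᵥ c, ?_, hVc,
    (hammingNorm_mulVec_le V c).trans (hammingNorm_uncurry_le_hammingNorm_ofBlocks V W)⟩
  rw [mulVec_mulVec, hv, ← mulVec_mulVec, hc, mulVec_zero]

theorem exists_ker_hammingNorm_le_of_mem_ker_checkX {B : Matrix κ ι R} (hB : H * B = 1)
    {v : (κ × κ) ⊕ (ι × ι) → R} (hv : checkX H *ᵥ v = 0)
    (hvZ : v ∉ Submodule.span R (Set.range (checkZ H))) :
    ∃ u, H *ᵥ u = 0 ∧ u ≠ 0 ∧ hammingNorm u ≤ hammingNorm v := by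
  obtain ⟨V, W, rfl⟩ := exists_ofBlocks_eq v
  rw [checkX_mulVec_ofBlocks_eq_zero] at hv
  obtain ⟨c, hc, hVc⟩ : ∃ c, H *ᵥ c = 0 ∧ c ᵥ* V ≠ 0 := by
    by_contra! h
    exact hvZ (ofBlocks_mem_span_checkZ hB hv h)
  refine ⟨c ᵥ* V, ?_, hVc,
    (hammingNorm_vecMul_le V c).trans (hammingNorm_uncurry_le_hammingNorm_ofBlocks V W)⟩
  rw [← vecMul_transpose, vecMul_vecMul, eq_neg_of_add_eq_zero_left hv, vecMul_neg,
    ← vecMul_vecMul, vecMul_transpose, hc, zero_vecMul, neg_zero]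

variable [NoZeroDivisors R]

theorem exists_mem_ker_checkZ_hammingNorm_le {c : κ → R} (hc : H *ᵥ c = 0) (hc0 : c ≠ 0) :
    ∃ v, checkZ H *ᵥ v = 0 ∧ v ∉ Submodule.span R (Set.range (checkX H)) ∧
      hammingNorm v ≤ hammingNorm c := by
  obtain ⟨j, hj⟩ := Function.ne_iff.mp hc0
  refine ⟨ofBlocks (vecMulVec c (Pi.single j 1)) 0, ?_, fun hv => ?_, ?_⟩
  · rw [checkZ_mulVec_ofBlocks_eq_zero, mul_vecMulVec, hc, Matrix.zero_mul]
    exact ext fun _ _ => zero_mul _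
  · have := mulVec_eq_zero_of_ofBlocks_mem_span_checkX hv hc
    rw [vecMulVec_mulVec, single_one_dotProduct, op_smul_eq_smul, smul_eq_zero] at this
    exact this.elim hj hc0
  · refine hammingNorm_le_of_forall_ne_zero (fun i => Sum.inl (i, j)) ?_
    rintro (⟨i, j'⟩ | _) h
    · simp [ofBlocks, vecMulVec, Pi.single_apply] at h ⊢
      simp_all
    · simp [ofBlocks] at h

theorem exists_mem_ker_checkX_hammingNorm_le {c : κ → R} (hc : H *ᵥ c = 0) (hc0 : c ≠ 0) :
    ∃ v, checkX H *ᵥ v = 0 ∧ v ∉ Submodule.span R (Set.range (checkZ H)) ∧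
      hammingNorm v ≤ hammingNorm c := by
  obtain ⟨j, hj⟩ := Function.ne_iff.mp hc0
  refine ⟨ofBlocks (vecMulVec (Pi.single j 1) c) 0, ?_, fun hv => ?_, ?_⟩
  · rw [checkX_mulVec_ofBlocks_eq_zero, vecMulVec_mul, vecMul_transpose, hc, Matrix.mul_zero,
      add_zero]
    exact ext fun _ _ => mul_zero _
  · have := vecMul_eq_zero_of_ofBlocks_mem_span_checkZ hv hc
    rw [vecMul_vecMulVec, dotProduct_single_one, smul_eq_zero] at this
    exact this.elim hj hc0
  · refine hammingNorm_le_of_forall_ne_zero (fun i => Sum.inl (j, i)) ?_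
    rintro (⟨j', i⟩ | _) h
    · simp [ofBlocks, vecMulVec, Pi.single_apply] at h ⊢
      simp_all
    · simp [ofBlocks] at h

theorem sInf_hammingNorm_ker_checkZ {B : Matrix κ ι R} (hB : H * B = 1) :
    sInf {w | ∃ v, checkZ H *ᵥ v = 0 ∧ v ∉ Submodule.span R (Set.range (checkX H)) ∧
      hammingNorm v = w} = sInf {w | ∃ c, H *ᵥ c = 0 ∧ c ≠ 0 ∧ hammingNorm c = w} := by
  refine Nat.sInf_eq_of_forall_exists_le ?_ ?_
  · rintro _ ⟨v, hv, hvX, rfl⟩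
    obtain ⟨c, hc, hc0, hcv⟩ := exists_ker_hammingNorm_le_of_mem_ker_checkZ hB hv hvX
    exact ⟨_, ⟨c, hc, hc0, rfl⟩, hcv⟩
  · rintro _ ⟨c, hc, hc0, rfl⟩
    obtain ⟨v, hv, hvX, hvc⟩ := exists_mem_ker_checkZ_hammingNorm_le hc hc0
    exact ⟨_, ⟨v, hv, hvX, rfl⟩, hvc⟩

theorem sInf_hammingNorm_ker_checkX {B : Matrix κ ι R} (hB : H * B = 1) :
    sInf {w | ∃ v, checkX H *ᵥ v = 0 ∧ v ∉ Submodule.span R (Set.range (checkZ H)) ∧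
      hammingNorm v = w} = sInf {w | ∃ c, H *ᵥ c = 0 ∧ c ≠ 0 ∧ hammingNorm c = w} := by
  refine Nat.sInf_eq_of_forall_exists_le ?_ ?_
  · rintro _ ⟨v, hv, hvZ, rfl⟩
    obtain ⟨c, hc, hc0, hcv⟩ := exists_ker_hammingNorm_le_of_mem_ker_checkX hB hv hvZ
    exact ⟨_, ⟨c, hc, hc0, rfl⟩, hcv⟩
  · rintro _ ⟨c, hc, hc0, rfl⟩
    obtain ⟨v, hv, hvZ, hvc⟩ := exists_mem_ker_checkX_hammingNorm_le hc hc0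
    exact ⟨_, ⟨v, hv, hvZ, rfl⟩, hvc⟩

end LaCross

theorem lacross_open_boundary_general
    {F : Type*} [Field F] [DecidableEq F] (n k : ℕ)
    (hkn : k < n)
    (H : Matrix (Fin (n - k)) (Fin n) F)
    (hrank : H.rank = n - k)
    (hker : ∃ v : Fin n → F, v ≠ 0 ∧ H.mulVec v = 0)
    (HX : Matrix (Fin n × Fin (n - k)) ((Fin n × Fin n) ⊕ (Fin (n - k) × Fin (n - k))) F)
    (HZ : Matrix (Fin (n - k) × Fin n) ((Fin n × Fin n) ⊕ (Fin (n - k) × Fin (n - k))) F)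
    (hHX : HX = fromCols ((1 : Matrix (Fin n) (Fin n) F) ⊗ₖ H)
        (Hᵀ ⊗ₖ (1 : Matrix (Fin (n - k)) (Fin (n - k)) F)))
    (hHZ : HZ = fromCols (H ⊗ₖ (1 : Matrix (Fin n) (Fin n) F))
        (-((1 : Matrix (Fin (n - k)) (Fin (n - k)) F) ⊗ₖ Hᵀ))) :
    ((n ^ 2 + (n - k) ^ 2 : ℕ) : ℤ) - HX.rank - HZ.rank = (k : ℤ) ^ 2 ∧
    (∃ v : ((Fin n × Fin n) ⊕ (Fin (n - k) × Fin (n - k))) → F,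
      HZ.mulVec v = 0 ∧ v ∉ Submodule.span F (Set.range HX)) ∧
    (∃ v : ((Fin n × Fin n) ⊕ (Fin (n - k) × Fin (n - k))) → F,
      HX.mulVec v = 0 ∧ v ∉ Submodule.span F (Set.range HZ)) ∧
    min
      (sInf {w : ℕ | ∃ v : ((Fin n × Fin n) ⊕ (Fin (n - k) × Fin (n - k))) → F,
        HZ.mulVec v = 0 ∧ v ∉ Submodule.span F (Set.range HX) ∧ hammingNorm v = w})
      (sInf {w : ℕ | ∃ v : ((Fin n × Fin n) ⊕ (Fin (n - k) × Fin (n - k))) → F,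
        HX.mulVec v = 0 ∧ v ∉ Submodule.span F (Set.range HZ) ∧ hammingNorm v = w})
    = sInf {w : ℕ | ∃ v : Fin n → F, H.mulVec v = 0 ∧ v ≠ 0 ∧ hammingNorm v = w} := by
  obtain rfl : HX = LaCross.checkX H := hHX
  obtain rfl : HZ = LaCross.checkZ H := hHZ
  obtain ⟨B, hB⟩ := exists_mul_eq_one_of_rank_eq (hrank.trans (Fintype.card_fin _).symm)
  obtain ⟨c, hc0, hc⟩ := hker
  obtain ⟨vZ, hvZ, hvZX, -⟩ := LaCross.exists_mem_ker_checkZ_hammingNorm_le hc hc0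
  obtain ⟨vX, hvX, hvXZ, -⟩ := LaCross.exists_mem_ker_checkX_hammingNorm_le hc hc0
  refine ⟨?_, ⟨vZ, hvZ, hvZX⟩, ⟨vX, hvX, hvXZ⟩, ?_⟩
  · rw [LaCross.rank_checkX hB, LaCross.rank_checkZ hB]
    simp only [Fintype.card_fin]
    push_cast [Nat.cast_sub hkn.le]
    ring
  · rw [LaCross.sInf_hammingNorm_ker_checkZ hB, LaCross.sInf_hammingNorm_ker_checkX hB, min_self]

/-- open-boundary qudit La-cross codes.  For `H ∈ F_q^{(n−k)×n}` of full row
rank `n−k` with nontrivial kernel, the CSS code with `H_X = [I_n ⊗ H | Hᵀ ⊗ I_{n−k}]` and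
`H_Z = [H ⊗ I_n | −I_{n−k} ⊗ Hᵀ]` on `N = n² + (n−k)²` coordinates encodes exactly `k²`
logical qudits and has distance equal to the minimum distance of the classical code
with parity-check matrix `H`. -/
theorem lacross_open_boundary
    {F : Type*} [Field F] [Fintype F] [DecidableEq F] (n k : ℕ)
    (hk : 1 ≤ k) (hkn : k < n)
    (H : Matrix (Fin (n - k)) (Fin n) F)
    (hrank : H.rank = n - k)
    (hker : ∃ v : Fin n → F, v ≠ 0 ∧ H.mulVec v = 0)
    (HX : Matrix (Fin n × Fin (n - k)) ((Fin n × Fin n) ⊕ (Fin (n - k) × Fin (n - k))) F)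
    (HZ : Matrix (Fin (n - k) × Fin n) ((Fin n × Fin n) ⊕ (Fin (n - k) × Fin (n - k))) F)
    (hHX : HX = fromCols ((1 : Matrix (Fin n) (Fin n) F) ⊗ₖ H)
        (Hᵀ ⊗ₖ (1 : Matrix (Fin (n - k)) (Fin (n - k)) F)))
    (hHZ : HZ = fromCols (H ⊗ₖ (1 : Matrix (Fin n) (Fin n) F))
        (-((1 : Matrix (Fin (n - k)) (Fin (n - k)) F) ⊗ₖ Hᵀ))) :
    ((n ^ 2 + (n - k) ^ 2 : ℕ) : ℤ) - HX.rank - HZ.rank = (k : ℤ) ^ 2 ∧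
    (∃ v : ((Fin n × Fin n) ⊕ (Fin (n - k) × Fin (n - k))) → F,
      HZ.mulVec v = 0 ∧ v ∉ Submodule.span F (Set.range HX)) ∧
    (∃ v : ((Fin n × Fin n) ⊕ (Fin (n - k) × Fin (n - k))) → F,
      HX.mulVec v = 0 ∧ v ∉ Submodule.span F (Set.range HZ)) ∧
    min
      (sInf {w : ℕ | ∃ v : ((Fin n × Fin n) ⊕ (Fin (n - k) × Fin (n - k))) → F,
        HZ.mulVec v = 0 ∧ v ∉ Submodule.span F (Set.range HX) ∧ hammingNorm v = w})
      (sInf {w : ℕ | ∃ v : ((Fin n × Fin n) ⊕ (Fin (n - k) × Fin (n - k))) → F,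
        HX.mulVec v = 0 ∧ v ∉ Submodule.span F (Set.range HZ) ∧ hammingNorm v = w})
    = sInf {w : ℕ | ∃ v : Fin n → F, H.mulVec v = 0 ∧ v ≠ 0 ∧ hammingNorm v = w} :=
  lacross_open_boundary_general n k hkn H hrank hker HX HZ hHX hHZ
end

section
/- Let F_q be a finite field, ∂₁^X ∈ F_q^{X₀×X₁} and ∂₂^X ∈ F_q^{X₁×X₂} matrices with ∂₁^X ∂₂^X = 0, and let ∂₁^Y ∈ F_q^{B×A} be a surjective matrix (trivial zeroth homology of the classical code complex Y). Let 𝒳 be the product complex with ∂₂^𝒳(w) = ((∂₂^X ⊗ I_A)w, (I_{X₂} ⊗ ∂₁^Y)w) and ∂₁^𝒳(u, v) = ((∂₁^X ⊗ I_A)u, −(I_{X₁} ⊗ ∂₁^Y)u + (∂₂^X ⊗ I_B)v). Then the middle homology of 𝒳 satisfies dim_{F_q}(ker ∂₁^𝒳 / im ∂₂^𝒳) = dim_{F_q}(ker ∂₁^X / im ∂₂^X) · dim_{F_q}(ker ∂₁^Y). -/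
/-!
Write a chain of the product complex as columns indexed by `A`. The columns `u_j` of a 1-cycle
`(u, v)` are cycles of `X`, and the boundary condition `∂₂^X v = ∂₁^Y u` says exactly that the
classes `[u_j] ∈ H₁(X)` are killed by `∂₁^Y`. So `(u, v) ↦ ([u_j])_j` maps the 1-cycles onto the
kernel of `∂₁^Y ⊗ id` on `H₁(X)^A`, and a right inverse of the surjective `∂₁^Y` shows that its
kernel is exactly the boundaries. Since `∂₁^Y ⊗ id` is again surjective, rank–nullity gives
`dim ker (∂₁^Y ⊗ id) = dim ker ∂₁^Y · dim H₁(X)`.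
-/

open Matrix Kronecker

noncomputable section

variable {F : Type*} [Field F] [Fintype F]
variable {X₀ X₁ X₂ A B : Type*}
  [Fintype X₀] [Fintype X₁] [Fintype X₂] [Fintype A] [Fintype B]
  [DecidableEq X₀] [DecidableEq X₁] [DecidableEq X₂] [DecidableEq A] [DecidableEq B]

/-- The boundary map `∂₂^𝒳(w) = ((∂₂^X ⊗ I_A)w, (I_{X₂} ⊗ ∂₁^Y)w)` of the
high-dimensional-expander product complex. -/
def hdxD2 (dX2 : Matrix X₁ X₂ F) (dY : Matrix B A F) :
    ((X₂ × A) → F) →ₗ[F] ((X₁ × A) → F) × ((X₂ × B) → F) :=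
  LinearMap.prod (dX2 ⊗ₖ (1 : Matrix A A F)).mulVecLin
    ((1 : Matrix X₂ X₂ F) ⊗ₖ dY).mulVecLin

/-- The boundary map `∂₁^𝒳(u, v) = ((∂₁^X ⊗ I_A)u, −(I_{X₁} ⊗ ∂₁^Y)u + (∂₂^X ⊗ I_B)v)`
of the high-dimensional-expander product complex. -/
def hdxD1 (dX1 : Matrix X₀ X₁ F) (dX2 : Matrix X₁ X₂ F) (dY : Matrix B A F) :
    (((X₁ × A) → F) × ((X₂ × B) → F)) →ₗ[F] ((X₀ × A) → F) × ((X₁ × B) → F) :=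
  LinearMap.prod
    ((dX1 ⊗ₖ (1 : Matrix A A F)).mulVecLin.comp (LinearMap.fst F _ _))
    ((dX2 ⊗ₖ (1 : Matrix B B F)).mulVecLin.comp (LinearMap.snd F _ _)
      - ((1 : Matrix X₁ X₁ F) ⊗ₖ dY).mulVecLin.comp (LinearMap.fst F _ _))

namespace Matrix

variable {R : Type*} [CommSemiring R] {m n p : Type*} [Fintype n]
  (V : Type*) [AddCommMonoid V] [Module R V]

/-- `M ⊗ id_V`, acting on `n → V` in place of `Rⁿ ⊗ V`. -/
def piMulVec (M : Matrix m n R) : (n → V) →ₗ[R] (m → V) where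
  toFun f i := ∑ j, M i j • f j
  map_add' f g := by funext i; simp [smul_add, Finset.sum_add_distrib]
  map_smul' c f := by funext i; simp [Finset.smul_sum, smul_comm c]

variable {V}

@[simp]
lemma piMulVec_apply (M : Matrix m n R) (f : n → V) (i : m) :
    M.piMulVec V f i = ∑ j, M i j • f j := rfl

lemma piMulVec_mul [Fintype p] (M : Matrix m n R) (N : Matrix n p R) :
    (M * N).piMulVec V = M.piMulVec V ∘ₗ N.piMulVec V := by
  ext f i
  simp only [piMulVec_apply, mul_apply, LinearMap.comp_apply, Finset.smul_sum, smul_smul,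
    Finset.sum_smul]
  exact Finset.sum_comm

lemma piMulVec_one [DecidableEq n] : (1 : Matrix n n R).piMulVec V = LinearMap.id := by
  ext f i
  simp [one_apply, ite_smul]

lemma piMulVec_comp_compLeft {W : Type*} [AddCommMonoid W] [Module R W] (M : Matrix m n R)
    (d : V →ₗ[R] W) : M.piMulVec W ∘ₗ d.compLeft n = d.compLeft m ∘ₗ M.piMulVec V := by
  ext f i
  simp

section Field

variable {K : Type*} [Field K] {m n : Type*} [Fintype m] [Fintype n] [DecidableEq m]
  {V : Type*} [AddCommGroup V] [Module K V]

lemma piMulVec_surjective {M : Matrix m n K} (hM : Function.Surjective M.mulVecLin) :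
    Function.Surjective (M.piMulVec V) := by
  obtain ⟨N, hMN⟩ := mulVec_surjective_iff_exists_right_inverse.mp hM
  intro g
  refine ⟨N.piMulVec V g, ?_⟩
  rw [← LinearMap.comp_apply, ← piMulVec_mul, hMN, piMulVec_one, LinearMap.id_apply]

lemma finrank_ker_piMulVec [FiniteDimensional K V] {M : Matrix m n K}
    (hM : Function.Surjective M.mulVecLin) :
    Module.finrank K (LinearMap.ker (M.piMulVec V)) =
      Module.finrank K (LinearMap.ker M.mulVecLin) * Module.finrank K V := by
  have hV := (M.piMulVec V).finrank_range_add_finrank_ker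
  have hK := M.mulVecLin.finrank_range_add_finrank_ker
  rw [LinearMap.range_eq_top.mpr (piMulVec_surjective hM), finrank_top] at hV
  simp only [Module.finrank_pi_fintype, Finset.sum_const, Finset.card_univ, smul_eq_mul] at hV
  rw [LinearMap.range_eq_top.mpr hM, finrank_top, Module.finrank_pi, Module.finrank_pi] at hK
  rw [← hK, add_mul] at hV
  omega

end Field

end Matrix

namespace LinearMap

variable {R : Type*} [Ring R] {L M N L' M' N' : Type*}
  [AddCommGroup L] [Module R L] [AddCommGroup M] [Module R M] [AddCommGroup N] [Module R N]
  [AddCommGroup L'] [Module R L'] [AddCommGroup M'] [Module R M'] [AddCommGroup N'] [Module R N']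

abbrev homology (d₁ : M →ₗ[R] N) (d₂ : L →ₗ[R] M) : Type _ :=
  ker d₁ ⧸ Submodule.comap (ker d₁).subtype (range d₂)

lemma homology_mk_eq_zero {d₁ : M →ₗ[R] N} {d₂ : L →ₗ[R] M} {x : ker d₁} :
    (Submodule.Quotient.mk x : d₁.homology d₂) = 0 ↔ (x : M) ∈ range d₂ :=
  Submodule.Quotient.mk_eq_zero _

def homologyCongr {d₁ : M →ₗ[R] N} {d₂ : L →ₗ[R] M} {d₁' : M' →ₗ[R] N'} {d₂' : L' →ₗ[R] M'}
    (e₀ : N ≃ₗ[R] N') (e₁ : M ≃ₗ[R] M') (e₂ : L ≃ₗ[R] L')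
    (h₁ : d₁' ∘ₗ e₁ = e₀ ∘ₗ d₁) (h₂ : d₂' ∘ₗ e₂ = e₁ ∘ₗ d₂) :
    d₁.homology d₂ ≃ₗ[R] d₁'.homology d₂' :=
  have hker : (ker d₁).map (e₁ : M →ₗ[R] M') = ker d₁' := by
    rw [← Submodule.map_comap_eq_of_surjective e₁.surjective (ker d₁'), ← ker_comp, h₁,
      LinearEquiv.ker_comp]
  have hrange : (range d₂).map (e₁ : M →ₗ[R] M') = range d₂' := by
    rw [← range_comp, ← h₂, LinearEquiv.range_comp]
  Submodule.Quotient.equiv _ _ (e₁.ofSubmodules _ _ hker) <| by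
    ext x
    rw [Submodule.mem_map_equiv, Submodule.mem_comap, Submodule.mem_comap,
      Submodule.subtype_apply, Submodule.subtype_apply, LinearEquiv.ofSubmodules_symm_apply,
      ← hrange, Submodule.mem_map_equiv]

end LinearMap

open LinearMap

section ProductComplex

variable {K : Type*} [Field K] {V₀ V₁ V₂ : Type*} [AddCommGroup V₀] [Module K V₀]
  [AddCommGroup V₁] [Module K V₁] [AddCommGroup V₂] [Module K V₂] {A B : Type*} [Fintype A]

/-- The product complex with `∂₁^X, ∂₂^X` replaced by arbitrary linear maps and `F^{X × A}` by
`A → V`; `hdxD2` and `hdxD1` are conjugate to `productD₂` and `productD₁` via `columnEquiv`. -/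
def productD₂ (d₂ : V₂ →ₗ[K] V₁) (M : Matrix B A K) : (A → V₂) →ₗ[K] (A → V₁) × (B → V₂) :=
  (d₂.compLeft A).prod (M.piMulVec V₂)

def productD₁ (d₁ : V₁ →ₗ[K] V₀) (d₂ : V₂ →ₗ[K] V₁) (M : Matrix B A K) :
    (A → V₁) × (B → V₂) →ₗ[K] (A → V₀) × (B → V₁) :=
  (d₁.compLeft A ∘ₗ fst K _ _).prod (d₂.compLeft B ∘ₗ snd K _ _ - M.piMulVec V₁ ∘ₗ fst K _ _)

variable {d₁ : V₁ →ₗ[K] V₀} {d₂ : V₂ →ₗ[K] V₁} {M : Matrix B A K}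

lemma mem_ker_productD₁ {u : A → V₁} {v : B → V₂} :
    (u, v) ∈ ker (productD₁ d₁ d₂ M) ↔ (∀ j, d₁ (u j) = 0) ∧ d₂ ∘ v = M.piMulVec V₁ u := by
  simp [productD₁, sub_eq_zero, funext_iff]

variable (d₁ d₂ M) in
def columnClasses : ker (productD₁ d₁ d₂ M) →ₗ[K] A → d₁.homology d₂ :=
  pi fun j => Submodule.mkQ _ ∘ₗ
    codRestrict (ker d₁) ((proj j : (A → V₁) →ₗ[K] V₁) ∘ₗ fst K _ _ ∘ₗ Submodule.subtype _)
      fun c => (mem_ker_productD₁.mp c.2).1 j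

lemma columnClasses_apply (c : ker (productD₁ d₁ d₂ M)) (j : A) :
    columnClasses d₁ d₂ M c j =
      Submodule.Quotient.mk ⟨c.1.1 j, (mem_ker_productD₁.mp c.2).1 j⟩ :=
  rfl

lemma range_columnClasses :
    range (columnClasses d₁ d₂ M) = ker (M.piMulVec (d₁.homology d₂)) := by
  have piMulVec_mk (b : B) (q : A → ker d₁) :
      M.piMulVec (d₁.homology d₂) (fun j => Submodule.Quotient.mk (q j)) b =
        Submodule.Quotient.mk (∑ j, M b j • q j) := by
    simp only [Matrix.piMulVec_apply, ← Submodule.mkQ_apply, map_sum, map_smul]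
  apply le_antisymm
  · rintro _ ⟨⟨⟨u, v⟩, hc⟩, rfl⟩
    obtain ⟨hu, hv⟩ := mem_ker_productD₁.mp hc
    refine mem_ker.mpr (funext fun b => ?_)
    rw [Pi.zero_apply, show columnClasses d₁ d₂ M ⟨(u, v), hc⟩ =
      fun j => Submodule.Quotient.mk ⟨u j, hu j⟩ from rfl, piMulVec_mk, homology_mk_eq_zero]
    refine ⟨v b, ?_⟩
    simpa using congrFun hv b
  · intro f hf
    choose q hq using fun j => Submodule.Quotient.mk_surjective _ (f j)
    have hqb (b : B) : ∑ j, M b j • (q j : V₁) ∈ range d₂ := by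
      have := congrFun (mem_ker.mp hf) b
      rw [← funext hq, piMulVec_mk, Pi.zero_apply, homology_mk_eq_zero] at this
      simpa using this
    choose z hz using hqb
    refine ⟨⟨(fun j => q j, z), mem_ker_productD₁.mpr ⟨fun j => (q j).2, funext hz⟩⟩, ?_⟩
    funext j
    rw [columnClasses_apply, ← hq j]

lemma ker_columnClasses [Fintype B] [DecidableEq B] (hM : Function.Surjective M.mulVecLin) :
    ker (columnClasses d₁ d₂ M) = (range (productD₂ d₂ M)).comap (Submodule.subtype _) := by
  obtain ⟨N, hMN⟩ := Matrix.mulVec_surjective_iff_exists_right_inverse.mp hM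
  apply le_antisymm
  · rintro ⟨⟨u, v⟩, hc⟩ hφ
    have hv : d₂.compLeft B v = M.piMulVec V₁ u := (mem_ker_productD₁.mp hc).2
    choose w hw using fun j => homology_mk_eq_zero.mp (congrFun (mem_ker.mp hφ) j)
    have hw : d₂.compLeft A w = u := funext hw
    have hr : d₂.compLeft B (v - M.piMulVec V₂ w) = 0 := by
      rw [map_sub, hv, ← LinearMap.comp_apply, ← Matrix.piMulVec_comp_compLeft,
        LinearMap.comp_apply, hw, sub_self]
    -- `N` is a right inverse of `M`: correct `w` so that its `M`-image becomes `v`.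
    refine ⟨w + N.piMulVec V₂ (v - M.piMulVec V₂ w), Prod.ext ?_ ?_⟩
    · change d₂.compLeft A (w + N.piMulVec V₂ (v - M.piMulVec V₂ w)) = u
      rw [map_add, ← LinearMap.comp_apply (d₂.compLeft A), ← Matrix.piMulVec_comp_compLeft,
        LinearMap.comp_apply, hr, map_zero, add_zero, hw]
    · change M.piMulVec V₂ (w + N.piMulVec V₂ (v - M.piMulVec V₂ w)) = v
      rw [map_add, ← LinearMap.comp_apply (M.piMulVec V₂), ← Matrix.piMulVec_mul, hMN,
        Matrix.piMulVec_one, id_apply, add_sub_cancel]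
  · rintro ⟨⟨u, v⟩, hc⟩ ⟨w, hw⟩
    refine mem_ker.mpr (funext fun j => homology_mk_eq_zero.mpr ⟨w j, ?_⟩)
    exact congrFun (congrArg Prod.fst hw) j

theorem finrank_homology_product [Fintype B] [DecidableEq B] [FiniteDimensional K V₁]
    (hM : Function.Surjective M.mulVecLin) :
    Module.finrank K ((productD₁ d₁ d₂ M).homology (productD₂ d₂ M)) =
      Module.finrank K (d₁.homology d₂) * Module.finrank K (ker M.mulVecLin) := by
  unfold LinearMap.homology
  rw [← ker_columnClasses hM, (columnClasses d₁ d₂ M).quotKerEquivRange.finrank_eq,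
    range_columnClasses, Matrix.finrank_ker_piMulVec hM, mul_comm]

end ProductComplex

section Kronecker

variable {K : Type*} [CommSemiring K] {l m n : Type*}

variable (K l m) in
def columnEquiv : (l × m → K) ≃ₗ[K] (m → l → K) :=
  (LinearEquiv.funCongrLeft K K (Equiv.prodComm m l)).trans (LinearEquiv.curry K K m l)

@[simp]
lemma columnEquiv_apply (u : l × m → K) (j : m) (i : l) : columnEquiv K l m u j i = u (i, j) :=
  rfl

lemma columnEquiv_kronecker_one_mulVec [Fintype n] [Fintype m] [DecidableEq m]
    (M : Matrix l n K) (u : n × m → K) :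
    columnEquiv K l m ((M ⊗ₖ (1 : Matrix m m K)) *ᵥ u) =
      M.mulVecLin.compLeft m (columnEquiv K n m u) := by
  ext j i
  simp [mulVec, dotProduct, Fintype.sum_prod_type, one_apply]

lemma columnEquiv_one_kronecker_mulVec [Fintype l] [DecidableEq l] [Fintype n]
    (M : Matrix m n K) (u : l × n → K) :
    columnEquiv K l m (((1 : Matrix l l K) ⊗ₖ M) *ᵥ u) =
      M.piMulVec (l → K) (columnEquiv K l n u) := by
  ext j i
  simp [mulVec, dotProduct, Fintype.sum_prod_type, one_apply, mul_comm]

end Kronecker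

lemma productD₁_comp_columnEquiv {F : Type*} [Field F] {X₀ X₁ X₂ A B : Type*} [Fintype X₁]
    [Fintype X₂] [Fintype A] [Fintype B] [DecidableEq X₁] [DecidableEq A] [DecidableEq B]
    (dX1 : Matrix X₀ X₁ F) (dX2 : Matrix X₁ X₂ F) (dY : Matrix B A F) :
    productD₁ dX1.mulVecLin dX2.mulVecLin dY ∘ₗ
        ((columnEquiv F X₁ A).prodCongr (columnEquiv F X₂ B)).toLinearMap =
      ((columnEquiv F X₀ A).prodCongr (columnEquiv F X₁ B)).toLinearMap ∘ₗ hdxD1 dX1 dX2 dY := by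
  refine LinearMap.ext fun ⟨u, v⟩ => Prod.ext ?_ ?_ <;>
    simp [productD₁, hdxD1, columnEquiv_kronecker_one_mulVec, columnEquiv_one_kronecker_mulVec]

lemma productD₂_comp_columnEquiv {F : Type*} [Field F] {X₁ X₂ A B : Type*}
    [Fintype X₂] [Fintype A] [DecidableEq X₂] [DecidableEq A]
    (dX2 : Matrix X₁ X₂ F) (dY : Matrix B A F) :
    productD₂ dX2.mulVecLin dY ∘ₗ (columnEquiv F X₂ A).toLinearMap =
      ((columnEquiv F X₁ A).prodCongr (columnEquiv F X₂ B)).toLinearMap ∘ₗ hdxD2 dX2 dY := by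
  refine LinearMap.ext fun w => Prod.ext ?_ ?_ <;>
    simp [productD₂, hdxD2, columnEquiv_kronecker_one_mulVec, columnEquiv_one_kronecker_mulVec]

theorem hdx_middle_homology_dimension_general
    (dX1 : Matrix X₀ X₁ F) (dX2 : Matrix X₁ X₂ F)
    (dY : Matrix B A F) (hY : Function.Surjective dY.mulVecLin) :
    Module.finrank F
      (↥(LinearMap.ker (hdxD1 dX1 dX2 dY)) ⧸
        Submodule.comap (LinearMap.ker (hdxD1 dX1 dX2 dY)).subtype
          (LinearMap.range (hdxD2 dX2 dY))) =
    Module.finrank F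
      (↥(LinearMap.ker dX1.mulVecLin) ⧸
        Submodule.comap (LinearMap.ker dX1.mulVecLin).subtype
          (LinearMap.range dX2.mulVecLin)) *
    Module.finrank F ↥(LinearMap.ker dY.mulVecLin) := by
  have hdx := homologyCongr _ _ _ (productD₁_comp_columnEquiv dX1 dX2 dY)
    (productD₂_comp_columnEquiv dX2 dY)
  exact hdx.finrank_eq.trans (finrank_homology_product hY)

/-- if `∂₁^X ∂₂^X = 0` and `∂₁^Y` is surjective (trivial zeroth homology of
the classical code complex), then the middle homology of the product complex `𝒳` has
dimension `dim H₁(X) · dim(ker ∂₁^Y)`. -/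
theorem hdx_middle_homology_dimension
    (dX1 : Matrix X₀ X₁ F) (dX2 : Matrix X₁ X₂ F) (hX : dX1 * dX2 = 0)
    (dY : Matrix B A F) (hY : Function.Surjective dY.mulVecLin) :
    Module.finrank F
      (↥(LinearMap.ker (hdxD1 dX1 dX2 dY)) ⧸
        Submodule.comap (LinearMap.ker (hdxD1 dX1 dX2 dY)).subtype
          (LinearMap.range (hdxD2 dX2 dY))) =
    Module.finrank F
      (↥(LinearMap.ker dX1.mulVecLin) ⧸
        Submodule.comap (LinearMap.ker dX1.mulVecLin).subtype
          (LinearMap.range dX2.mulVecLin)) *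
    Module.finrank F ↥(LinearMap.ker dY.mulVecLin) :=
  hdx_middle_homology_dimension_general dX1 dX2 dY hY
end
end

section
/- Let F_q be a finite field, ∂₁^X ∈ F_q^{X₀×X₁} and ∂₂^X ∈ F_q^{X₁×X₂} matrices with ∂₁^X ∂₂^X = 0 and ker ∂₁^X ⊄ im ∂₂^X, and let ∂₁^Y ∈ F_q^{B×A} be a surjective matrix with ker ∂₁^Y ≠ 0. Let 𝒳 be the product complex with ∂₂^𝒳(w) = ((∂₂^X ⊗ I_A)w, (I_{X₂} ⊗ ∂₁^Y)w) and ∂₁^𝒳(u, v) = ((∂₁^X ⊗ I_A)u, −(I_{X₁} ⊗ ∂₁^Y)u + (∂₂^X ⊗ I_B)v). Define the 1-systoles S₁(X) = min{wt(z) : z ∈ ker ∂₁^X \ im ∂₂^X}, S₁(Y) = min{wt(z) : z ∈ ker ∂₁^Y, z ≠ 0}, and S₁(𝒳) = min{wt(z) : z ∈ ker ∂₁^𝒳 \ im ∂₂^𝒳}. Then S₁(𝒳) = S₁(X) · S₁(Y). -/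
/-!
Write a 1-chain `(z₁, z₂)` as `(vec Z₁, vec Z₂)` with `Z₁ : Matrix A X₁ F`, `Z₂ : Matrix B X₂ F`;
then `M ⊗ₖ 1` acts as `Z ↦ Z * Mᵀ` and `1 ⊗ₖ ∂₁^Y` as `Z ↦ ∂₁^Y * Z`.

Upper bound: for minimal `x` and `y` the chain `(y ⊗ x, 0)` is a cycle of weight `|x| |y|`, and
it is not a boundary because its row at any `a` with `y a ≠ 0` is a nonzero multiple of `x`.

Lower bound: let `(z₁, z₂)` be a cycle that is not a boundary. If every row of `Z₁` lay in
`im ∂₂^X`, the surjectivity of `∂₁^Y` would make the chain a boundary, so some row does not.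
A functional `φ` vanishing on `im ∂₂^X` but not on that row yields `v = (φ (Z₁ a))ₐ`, a nonzero
element of `ker ∂₁^Y`. Every row `Z₁ a` with `v a ≠ 0` is a cycle of `X` outside `im ∂₂^X`, hence
`wt z₁ ≥ S₁(X) · wt v ≥ S₁(X) · S₁(Y)`.
-/

open Matrix Kronecker

namespace Matrix

variable {R S : Type*} {l m n : Type*}

theorem mul_transpose_apply_eq_mulVec [NonUnitalCommSemiring R] [Fintype n] (Z : Matrix m n R)
    (M : Matrix l n R) (i : m) : (Z * Mᵀ) i = M *ᵥ Z i := by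
  rw [mul_apply_eq_vecMul, vecMul_transpose]

theorem kronecker_one_mulVec_vec [CommSemiring R] [Fintype m] [Fintype n] [DecidableEq m]
    (M : Matrix l n R) (Z : Matrix m n R) :
    (M ⊗ₖ (1 : Matrix m m R)) *ᵥ vec Z = vec (Z * Mᵀ) := by
  rw [kronecker_mulVec_vec, Matrix.one_mul]

section HammingNorm

variable [Fintype m] [Fintype n] [DecidableEq R]

theorem hammingNorm_vec [Zero R] (Z : Matrix m n R) :
    hammingNorm (vec Z) = ∑ i, hammingNorm (Z i) := by
  rw [hammingNorm, Finset.card_filter, Fintype.sum_prod_type_right]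
  refine Finset.sum_congr rfl fun i _ => ?_
  rw [hammingNorm, Finset.card_filter]
  rfl

theorem hammingNorm_vec_vecMulVec [MulZeroClass R] [NoZeroDivisors R] (x : m → R) (y : n → R) :
    hammingNorm (vec (vecMulVec x y)) = hammingNorm x * hammingNorm y := by
  rw [mul_comm, hammingNorm, hammingNorm, hammingNorm, ← Finset.card_product,
    ← Finset.filter_product]
  simp [vecMulVec_apply, and_comm]

theorem mul_le_hammingNorm_vec [Zero R] [Zero S] [DecidableEq S] {Z : Matrix m n R} {v : m → S}
    {s t : ℕ} (hv : t ≤ hammingNorm v) (hZ : ∀ i, v i ≠ 0 → s ≤ hammingNorm (Z i)) :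
    s * t ≤ hammingNorm (vec Z) :=
  calc s * t ≤ s * hammingNorm v := by gcongr
    _ = ∑ i with v i ≠ 0, s := by simp [hammingNorm, mul_comm]
    _ ≤ ∑ i with v i ≠ 0, hammingNorm (Z i) :=
      Finset.sum_le_sum fun i hi => hZ i (Finset.mem_filter.1 hi).2
    _ ≤ ∑ i, hammingNorm (Z i) := Finset.sum_le_sum_of_subset (Finset.filter_subset _ _)
    _ = hammingNorm (vec Z) := (hammingNorm_vec Z).symm

end HammingNorm

theorem exists_mulVec_eq_zero_of_row_notMem [Field R] [Fintype m] {W : Submodule R (n → R)}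
    (M : Matrix l m R) (Z : Matrix m n R) (hMZ : ∀ b, (M * Z) b ∈ W) {a₀ : m} (ha₀ : Z a₀ ∉ W) :
    ∃ v : m → R, M *ᵥ v = 0 ∧ v ≠ 0 ∧ ∀ a, v a ≠ 0 → Z a ∉ W := by
  obtain ⟨φ, hφ, hWφ⟩ := W.exists_le_ker_of_notMem ha₀
  refine ⟨fun a => φ (Z a), ?_, fun h => hφ (congrFun h a₀), fun a ha hZa => ha (hWφ hZa)⟩
  ext b
  have := hWφ (hMZ b)
  rw [LinearMap.mem_ker, mul_apply_eq_vecMul, vecMul_eq_sum, map_sum] at this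
  simpa [mulVec, dotProduct] using this

end Matrix

section ProductComplex

variable {R : Type*} {X₀ X₁ X₂ A B : Type*} [Fintype X₂] [Fintype A] [DecidableEq A]

section Boundary

variable [DecidableEq X₂]

def IsProductBoundary [CommRing R] (dX2 : Matrix X₁ X₂ R) (dY : Matrix B A R)
    (z : (X₁ × A → R) × (X₂ × B → R)) : Prop :=
  ∃ u : X₂ × A → R,
    ((dX2 ⊗ₖ (1 : Matrix A A R)) *ᵥ u, ((1 : Matrix X₂ X₂ R) ⊗ₖ dY) *ᵥ u) = z

variable {dX2 : Matrix X₁ X₂ R} {dY : Matrix B A R} {Z₁ : Matrix A X₁ R} {Z₂ : Matrix B X₂ R}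

theorem isProductBoundary_vec_iff [CommRing R] :
    IsProductBoundary dX2 dY (vec Z₁, vec Z₂) ↔
      ∃ U : Matrix A X₂ R, U * dX2ᵀ = Z₁ ∧ dY * U = Z₂ := by
  simp only [IsProductBoundary, vec_bijective.surjective.exists, kronecker_one_mulVec_vec,
    ← vec_mul_eq_mulVec, Prod.mk.injEq, vec_inj]

theorem isProductBoundary_of_rows_mem_range [CommRing R] [Fintype B] [DecidableEq B]
    (hY : Function.Surjective dY.mulVec) (hcyc : dY * Z₁ = Z₂ * dX2ᵀ)
    (hrows : ∀ a, Z₁ a ∈ LinearMap.range dX2.mulVecLin) :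
    IsProductBoundary dX2 dY (vec Z₁, vec Z₂) := by
  choose U₀ hU₀ using hrows
  obtain ⟨E, hE⟩ := mulVec_surjective_iff_exists_right_inverse.1 hY
  have hU₀ : of U₀ * dX2ᵀ = Z₁ := funext fun a => by
    rw [mul_transpose_apply_eq_mulVec]
    exact hU₀ a
  -- `Z₂ - dY * U₀` is killed by `· * dX2ᵀ`, so adding its lift through the right inverse `E`
  -- fixes the second component without changing the first.
  refine isProductBoundary_vec_iff.2 ⟨of U₀ + E * (Z₂ - dY * of U₀), ?_, ?_⟩
  · rw [Matrix.add_mul, Matrix.mul_assoc, Matrix.sub_mul, ← hcyc, Matrix.mul_assoc, hU₀,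
      sub_self, Matrix.mul_zero, add_zero]
  · rw [Matrix.mul_add, ← Matrix.mul_assoc, hE, Matrix.one_mul, add_sub_cancel]

theorem not_isProductBoundary_vecMulVec [Field R] {x : X₁ → R} {y : A → R}
    (hx : x ∉ LinearMap.range dX2.mulVecLin) (hy : y ≠ 0) :
    ¬IsProductBoundary dX2 dY (vec (vecMulVec y x), 0) := by
  rw [← vec_zero, isProductBoundary_vec_iff]
  rintro ⟨U, hU, -⟩
  obtain ⟨a, ha⟩ := Function.ne_iff.1 hy
  refine hx ⟨(y a)⁻¹ • U a, ?_⟩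
  rw [mulVecLin_apply, mulVec_smul, ← mul_transpose_apply_eq_mulVec, hU]
  exact inv_smul_smul₀ ha x

end Boundary

section Cycle

variable [Fintype X₁] [Fintype B] [DecidableEq X₁] [DecidableEq B] [CommRing R]

def IsProductCycle (dX1 : Matrix X₀ X₁ R) (dX2 : Matrix X₁ X₂ R) (dY : Matrix B A R)
    (z : (X₁ × A → R) × (X₂ × B → R)) : Prop :=
  (dX1 ⊗ₖ (1 : Matrix A A R)) *ᵥ z.1 = 0 ∧
    (dX2 ⊗ₖ (1 : Matrix B B R)) *ᵥ z.2 - ((1 : Matrix X₁ X₁ R) ⊗ₖ dY) *ᵥ z.1 = 0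

variable {dX1 : Matrix X₀ X₁ R} {dX2 : Matrix X₁ X₂ R} {dY : Matrix B A R}

theorem isProductCycle_vec_iff {Z₁ : Matrix A X₁ R} {Z₂ : Matrix B X₂ R} :
    IsProductCycle dX1 dX2 dY (vec Z₁, vec Z₂) ↔ Z₁ * dX1ᵀ = 0 ∧ dY * Z₁ = Z₂ * dX2ᵀ := by
  simp only [IsProductCycle, kronecker_one_mulVec_vec, ← vec_mul_eq_mulVec, ← vec_sub,
    vec_eq_zero_iff, sub_eq_zero, eq_comm (a := Z₂ * dX2ᵀ)]

theorem isProductCycle_vecMulVec {x : X₁ → R} {y : A → R} (hx : dX1 *ᵥ x = 0)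
    (hy : dY *ᵥ y = 0) : IsProductCycle dX1 dX2 dY (vec (vecMulVec y x), 0) := by
  rw [← vec_zero, isProductCycle_vec_iff, vecMulVec_mul, vecMul_transpose, hx, mul_vecMulVec,
    hy, Matrix.zero_mul, zero_vecMulVec]
  exact ⟨by ext; simp [vecMulVec_apply], rfl⟩

end Cycle

theorem mul_le_hammingNorm_of_not_isProductBoundary [Fintype X₁] [Fintype B] [DecidableEq X₁]
    [DecidableEq X₂] [DecidableEq B] [Field R] [DecidableEq R] {dX1 : Matrix X₀ X₁ R}
    {dX2 : Matrix X₁ X₂ R} {dY : Matrix B A R} (hY : Function.Surjective dY.mulVec) {sX sY : ℕ}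
    (hsX : ∀ x, dX1 *ᵥ x = 0 → x ∉ LinearMap.range dX2.mulVecLin → sX ≤ hammingNorm x)
    (hsY : ∀ y, dY *ᵥ y = 0 → y ≠ 0 → sY ≤ hammingNorm y)
    {z : (X₁ × A → R) × (X₂ × B → R)} (hz : IsProductCycle dX1 dX2 dY z)
    (hnb : ¬IsProductBoundary dX2 dY z) :
    sX * sY ≤ hammingNorm z.1 + hammingNorm z.2 := by
  obtain ⟨z₁, z₂⟩ := z
  obtain ⟨Z₁, rfl⟩ := vec_bijective.surjective z₁
  obtain ⟨Z₂, rfl⟩ := vec_bijective.surjective z₂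
  obtain ⟨hZ₁, hcyc⟩ := isProductCycle_vec_iff.1 hz
  obtain ⟨a₀, ha₀⟩ : ∃ a, Z₁ a ∉ LinearMap.range dX2.mulVecLin := by
    by_contra! h
    exact hnb (isProductBoundary_of_rows_mem_range hY hcyc h)
  have hrows : ∀ b, (dY * Z₁) b ∈ LinearMap.range dX2.mulVecLin := fun b =>
    ⟨Z₂ b, by rw [hcyc, mul_transpose_apply_eq_mulVec, mulVecLin_apply]⟩
  obtain ⟨v, hv, hv0, hvZ⟩ := exists_mulVec_eq_zero_of_row_notMem dY Z₁ hrows ha₀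
  refine (mul_le_hammingNorm_vec (hsY v hv hv0) fun a ha => hsX _ ?_ (hvZ a ha)).trans
    le_self_add
  rw [← mul_transpose_apply_eq_mulVec, hZ₁]
  rfl

end ProductComplex

theorem hdx_one_systole_general
    {F : Type*} [Field F] [DecidableEq F]
    {X₀ X₁ X₂ A B : Type*}
    [Fintype X₁] [Fintype X₂] [Fintype A] [Fintype B]
    [DecidableEq X₁] [DecidableEq X₂] [DecidableEq A] [DecidableEq B]
    (dX1 : Matrix X₀ X₁ F) (dX2 : Matrix X₁ X₂ F)
    (hXne : ∃ z : X₁ → F, dX1.mulVec z = 0 ∧ ¬∃ u : X₂ → F, dX2.mulVec u = z)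
    (dY : Matrix B A F) (hYsurj : Function.Surjective dY.mulVec)
    (hYker : ∃ z : A → F, z ≠ 0 ∧ dY.mulVec z = 0) :
    sInf {w : ℕ | ∃ z : ((X₁ × A) → F) × ((X₂ × B) → F),
        ((dX1 ⊗ₖ (1 : Matrix A A F)).mulVec z.1 = 0 ∧
          (dX2 ⊗ₖ (1 : Matrix B B F)).mulVec z.2
            - ((1 : Matrix X₁ X₁ F) ⊗ₖ dY).mulVec z.1 = 0) ∧
        (¬∃ u : X₂ × A → F,
          ((dX2 ⊗ₖ (1 : Matrix A A F)).mulVec u,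
            ((1 : Matrix X₂ X₂ F) ⊗ₖ dY).mulVec u) = z) ∧
        hammingNorm z.1 + hammingNorm z.2 = w} =
    sInf {w : ℕ | ∃ z : X₁ → F,
        dX1.mulVec z = 0 ∧ (¬∃ u : X₂ → F, dX2.mulVec u = z) ∧ hammingNorm z = w} *
    sInf {w : ℕ | ∃ z : A → F, dY.mulVec z = 0 ∧ z ≠ 0 ∧ hammingNorm z = w} := by
  set SX := {w : ℕ | ∃ z : X₁ → F,
    dX1.mulVec z = 0 ∧ (¬∃ u : X₂ → F, dX2.mulVec u = z) ∧ hammingNorm z = w}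
  set SY := {w : ℕ | ∃ z : A → F, dY.mulVec z = 0 ∧ z ≠ 0 ∧ hammingNorm z = w}
  obtain ⟨x, hx, hxW, hxw⟩ :=
    Nat.sInf_mem (s := SX) (hXne.elim fun x hx => ⟨_, x, hx.1, hx.2, rfl⟩)
  obtain ⟨y, hy, hy0, hyw⟩ :=
    Nat.sInf_mem (s := SY) (hYker.elim fun y hy => ⟨_, y, hy.2, hy.1, rfl⟩)
  have hxy : hammingNorm (vec (vecMulVec y x)) + hammingNorm (0 : X₂ × B → F) =
      sInf SX * sInf SY := by
    rw [hammingNorm_vec_vecMulVec, hammingNorm_zero, add_zero, hxw, hyw, mul_comm]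
  refine le_antisymm (Nat.sInf_le ?witness) (le_csInf ⟨_, ?witness⟩ ?_)
  · exact ⟨_, isProductCycle_vecMulVec hx hy, not_isProductBoundary_vecMulVec hxW hy0, hxy⟩
  rintro _ ⟨z, hz, hnb, rfl⟩
  exact mul_le_hammingNorm_of_not_isProductBoundary (sX := sInf SX) (sY := sInf SY) hYsurj
    (fun x hx hxW => Nat.sInf_le ⟨x, hx, hxW, rfl⟩) (fun y hy hy0 => Nat.sInf_le ⟨y, hy, hy0, rfl⟩)
    hz hnb

/-- the 1-systole of the high-dimensional-expander product complex is
multiplicative: `S₁(𝒳) = S₁(X) · S₁(Y)`. -/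
theorem hdx_one_systole
    {F : Type*} [Field F] [Fintype F] [DecidableEq F]
    {X₀ X₁ X₂ A B : Type*}
    [Fintype X₀] [Fintype X₁] [Fintype X₂] [Fintype A] [Fintype B]
    [DecidableEq X₀] [DecidableEq X₁] [DecidableEq X₂] [DecidableEq A] [DecidableEq B]
    (dX1 : Matrix X₀ X₁ F) (dX2 : Matrix X₁ X₂ F) (hX : dX1 * dX2 = 0)
    (hXne : ∃ z : X₁ → F, dX1.mulVec z = 0 ∧ ¬∃ u : X₂ → F, dX2.mulVec u = z)
    (dY : Matrix B A F) (hYsurj : Function.Surjective dY.mulVec)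
    (hYker : ∃ z : A → F, z ≠ 0 ∧ dY.mulVec z = 0) :
    sInf {w : ℕ | ∃ z : ((X₁ × A) → F) × ((X₂ × B) → F),
        ((dX1 ⊗ₖ (1 : Matrix A A F)).mulVec z.1 = 0 ∧
          (dX2 ⊗ₖ (1 : Matrix B B F)).mulVec z.2
            - ((1 : Matrix X₁ X₁ F) ⊗ₖ dY).mulVec z.1 = 0) ∧
        (¬∃ u : X₂ × A → F,
          ((dX2 ⊗ₖ (1 : Matrix A A F)).mulVec u,
            ((1 : Matrix X₂ X₂ F) ⊗ₖ dY).mulVec u) = z) ∧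
        hammingNorm z.1 + hammingNorm z.2 = w} =
    sInf {w : ℕ | ∃ z : X₁ → F,
        dX1.mulVec z = 0 ∧ (¬∃ u : X₂ → F, dX2.mulVec u = z) ∧ hammingNorm z = w} *
    sInf {w : ℕ | ∃ z : A → F, dY.mulVec z = 0 ∧ z ≠ 0 ∧ hammingNorm z = w} :=
  hdx_one_systole_general dX1 dX2 hXne dY hYsurj hYker
end

section
/- Let F_q be a finite field and consider the twisted bundle complex E built from a base boundary matrix ∂^B ∈ F_q^{B₀×B₁}, a fiber boundary matrix ∂^F ∈ F_q^{F₀×F₁}, and a connection assigning to each (b, a) ∈ B₁×B₀ permutation matrices P⁰_{b,a} on F_q^{F₀} and P¹_{b,a} on F_q^{F₁} with P⁰_{b,a} ∂^F = ∂^F P¹_{b,a}. Suppose every column of ∂^F has entries summing to 0 in F_q. Then Π₀ ∘ ∂₁^E = ∂^B ∘ Π₁ and Π₁ ∘ ∂₂^E = 0; consequently the bundle projection maps cycles of E to cycles of B and boundaries to boundaries, so it induces a well-defined map Π_* : H₁(E) → H₁(B). -/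
open Matrix

noncomputable section

variable {F : Type*} [Field F] [Fintype F]
variable {B₀ B₁ F₀ F₁ : Type*} [Fintype B₀] [Fintype B₁] [Fintype F₀] [Fintype F₁]
  [DecidableEq B₀] [DecidableEq B₁] [DecidableEq F₀] [DecidableEq F₁]

/-- The boundary map `∂₂^E` of the twisted bundle complex:
`∂₂^E(b ⊗ f) = (Σ_a (∂^B)_{a,b} · a ⊗ (P¹_{b,a} f)) ⊕ (−b ⊗ (∂^F f))`. -/
def bundleD2 (dB : Matrix B₀ B₁ F) (dF : Matrix F₀ F₁ F)
    (P1 : B₁ → B₀ → Matrix F₁ F₁ F) (w : B₁ × F₁ → F) :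
    ((B₀ × F₁) → F) × ((B₁ × F₀) → F) :=
  (fun p => ∑ b : B₁, dB p.1 b * (P1 b p.1).mulVec (fun j => w (b, j)) p.2,
   fun p => -(dF.mulVec (fun j => w (p.1, j)) p.2))

/-- The boundary map `∂₁^E` of the twisted bundle complex:
`∂₁^E(a ⊗ f ⊕ b ⊗ f') = a ⊗ (∂^F f) + Σ_a (∂^B)_{a,b} · a ⊗ (P⁰_{b,a} f')`. -/
def bundleD1 (dB : Matrix B₀ B₁ F) (dF : Matrix F₀ F₁ F)
    (P0 : B₁ → B₀ → Matrix F₀ F₀ F)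
    (z : ((B₀ × F₁) → F) × ((B₁ × F₀) → F)) : (B₀ × F₀) → F :=
  fun p => dF.mulVec (fun j => z.1 (p.1, j)) p.2
    + ∑ b : B₁, dB p.1 b * (P0 b p.1).mulVec (fun i => z.2 (b, i)) p.2

lemma sum_mulVec_col_zero (dF : Matrix F₀ F₁ F) (hcol : ∀ j : F₁, ∑ i : F₀, dF i j = 0)
    (v : F₁ → F) : ∑ i : F₀, dF.mulVec v i = 0 := by
  simp only [mulVec, dotProduct]
  rw [Finset.sum_comm]
  simp only [← Finset.sum_mul, hcol, zero_mul, Finset.sum_const_zero]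

lemma sum_perm_mulVec (σ : Equiv.Perm F₀) (v : F₀ → F) :
    ∑ i : F₀, (σ.permMatrix F).mulVec v i = ∑ i : F₀, v i := by
  have h : ∀ i, (σ.permMatrix F).mulVec v i = v (σ i) := by
    intro i
    simp [Equiv.Perm.permMatrix, mulVec, dotProduct, PEquiv.toMatrix,
      Equiv.toPEquiv, Option.mem_def]
  simp only [h]
  exact Equiv.sum_comp σ v

/-- if every column of `∂^F` sums to `0`, then `Π₀ ∘ ∂₁^E = ∂^B ∘ Π₁`
and `Π₁ ∘ ∂₂^E = 0`; hence the bundle projection maps cycles to cycles and boundaries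
to boundaries, inducing a well-defined map `Π_* : H₁(E) → H₁(B)`. -/
theorem bundle_projection_well_defined
    (dB : Matrix B₀ B₁ F) (dF : Matrix F₀ F₁ F)
    (P0 : B₁ → B₀ → Matrix F₀ F₀ F) (P1 : B₁ → B₀ → Matrix F₁ F₁ F)
    (hP0 : ∀ b a, ∃ σ : Equiv.Perm F₀, P0 b a = σ.permMatrix F)
    (hP1 : ∀ b a, ∃ σ : Equiv.Perm F₁, P1 b a = σ.permMatrix F)
    (hcomp : ∀ b a, P0 b a * dF = dF * P1 b a)
    (hcol : ∀ j : F₁, ∑ i : F₀, dF i j = 0) :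
    (∀ z : ((B₀ × F₁) → F) × ((B₁ × F₀) → F),
      (fun a : B₀ => ∑ i : F₀, bundleD1 dB dF P0 z (a, i))
        = dB.mulVec (fun b : B₁ => ∑ i : F₀, z.2 (b, i))) ∧
    (∀ w : B₁ × F₁ → F,
      (fun b : B₁ => ∑ i : F₀, (bundleD2 dB dF P1 w).2 (b, i)) = 0) := by
  constructor
  · intro z
    funext a
    simp only [bundleD1]
    rw [Finset.sum_add_distrib, sum_mulVec_col_zero dF hcol, zero_add, Finset.sum_comm]
    simp only [← Finset.mul_sum]
    rw [mulVec, dotProduct]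
    congr 1
    funext b
    congr 1
    obtain ⟨σ, hσ⟩ := hP0 b a
    rw [hσ, sum_perm_mulVec]
  · intro w
    funext b
    simp only [bundleD2, Finset.sum_neg_distrib]
    rw [sum_mulVec_col_zero dF hcol]
    simp
end
end

section
/- Let F_q be a finite field and consider the twisted bundle complex E built from a base boundary matrix ∂^B ∈ F_q^{B₀×B₁}, a fiber boundary matrix ∂^F ∈ F_q^{F₀×F₁} (F₀ nonempty), and a connection assigning to each (b, a) ∈ B₁×B₀ permutation matrices P⁰_{b,a} on F_q^{F₀} and P¹_{b,a} on F_q^{F₁} with P⁰_{b,a} ∂^F = ∂^F P¹_{b,a}. Suppose every column of ∂^F has entries summing to 0 in F_q, and suppose every vector c ∈ F_q^{F₀} with Σ_i c_i = 0 lies in the column space of ∂^F. Then for every base cycle b ∈ ker ∂^B ⊆ F_q^{B₁} there exists z ∈ ker ∂₁^E with Π₁(z) = b; i.e., the induced map Π_* : H₁(E) → H₁(B) is onto. -/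
open Matrix

noncomputable section

variable {F : Type*} [Field F] [Fintype F]
variable {B₀ B₁ F₀ F₁ : Type*} [Fintype B₀] [Fintype B₁] [Fintype F₀] [Fintype F₁]
  [DecidableEq B₀] [DecidableEq B₁] [DecidableEq F₀] [DecidableEq F₁]

/-- Permutation matrices preserve coordinate sums under `mulVec`. -/
lemma permMatrix_mulVec_sum {F : Type*} [Field F] {F₀ : Type*} [Fintype F₀] [DecidableEq F₀]
    (σ : Equiv.Perm F₀) (v : F₀ → F) :
    ∑ i, (σ.permMatrix F).mulVec v i = ∑ i, v i := by
  have h : ∀ i, (σ.permMatrix F).mulVec v i = v (σ i) := by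
    intro i
    simp [mulVec, dotProduct, Equiv.Perm.permMatrix, PEquiv.toMatrix, Equiv.toPEquiv_apply]
  simp only [h]
  exact Equiv.sum_comp σ (fun i => v i)

/-- if every column of `∂^F` sums to `0` and every fiber 0-chain with
coordinate sum `0` is a boundary (lies in the column space of `∂^F`), then for every
base cycle `b ∈ ker ∂^B` there is a cycle `z ∈ ker ∂₁^E` with `Π₁(z) = b`; i.e. the
induced map `Π_* : H₁(E) → H₁(B)` is onto. -/

theorem bundle_projection_onto
    [Nonempty F₀]
    (dB : Matrix B₀ B₁ F) (dF : Matrix F₀ F₁ F)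
    (P0 : B₁ → B₀ → Matrix F₀ F₀ F) (P1 : B₁ → B₀ → Matrix F₁ F₁ F)
    (hP0 : ∀ b a, ∃ σ : Equiv.Perm F₀, P0 b a = σ.permMatrix F)
    (hP1 : ∀ b a, ∃ σ : Equiv.Perm F₁, P1 b a = σ.permMatrix F)
    (hcomp : ∀ b a, P0 b a * dF = dF * P1 b a)
    (hcol : ∀ j : F₁, ∑ i : F₀, dF i j = 0)
    (hbdry : ∀ c : F₀ → F, (∑ i : F₀, c i = 0) → ∃ f : F₁ → F, dF.mulVec f = c) :
    ∀ bv : B₁ → F, dB.mulVec bv = 0 →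
      ∃ z : ((B₀ × F₁) → F) × ((B₁ × F₀) → F),
        bundleD1 dB dF P0 z = 0 ∧
        (fun b : B₁ => ∑ i : F₀, z.2 (b, i)) = bv := by
  intro bv hbv
  obtain ⟨i₀⟩ := ‹Nonempty F₀›
  set z2 : (B₁ × F₀) → F := fun p => if p.2 = i₀ then bv p.1 else 0 with hz2
  set c : B₀ → F₀ → F :=
    fun a i => -(∑ b : B₁, dB a b * (P0 b a).mulVec (fun k => z2 (b, k)) i) with hc
  have hsum : ∀ a : B₀, ∑ i, c a i = 0 := by
    intro a
    have key : ∀ b : B₁, ∑ i, dB a b * (P0 b a).mulVec (fun k => z2 (b, k)) i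
        = dB a b * bv b := by
      intro b
      rw [← Finset.mul_sum]
      obtain ⟨σ, hσ⟩ := hP0 b a
      rw [hσ, permMatrix_mulVec_sum]
      congr 1
      simp [hz2]
    simp only [hc, Finset.sum_neg_distrib, neg_eq_zero]
    rw [Finset.sum_comm, Finset.sum_congr rfl fun b _ => key b]
    have := congrFun hbv a
    simpa [mulVec, dotProduct] using this
  choose f hf using fun a => hbdry (c a) (hsum a)
  refine ⟨(fun p => f p.1 p.2, z2), ?_, ?_⟩
  · funext p
    obtain ⟨a, i⟩ := p
    have h1 : dF.mulVec (fun j => f a j) i = c a i := congrFun (hf a) i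
    simp only [bundleD1, h1, hc, Pi.zero_apply]
    exact neg_add_cancel _
  · funext b
    simp [hz2]
end
end

section
/- Let F_q be a finite field and consider the twisted bundle complex E built from a base boundary matrix ∂^B ∈ F_q^{B₀×B₁}, a fiber boundary matrix ∂^F ∈ F_q^{F₀×F₁}, and a connection assigning to each (b, a) ∈ B₁×B₀ permutation matrices P⁰_{b,a} on F_q^{F₀} and P¹_{b,a} on F_q^{F₁} with P⁰_{b,a} ∂^F = ∂^F P¹_{b,a}. Suppose: (ii) every column of ∂^F has entries summing to 0 in F_q; (iii) every vector c ∈ F_q^{F₀} with Σ_i c_i = 0 lies in the column space of ∂^F; (iv) ∂^B : F_q^{B₁} → F_q^{B₀} is surjective; and (v) every connection permutation acts trivially on fiber 1-cycles, i.e., P¹_{b,a} z = z for all z ∈ ker ∂^F and all (b, a). Then every z ∈ ker ∂₁^E with Π₁(z) = 0 lies in im ∂₂^E; i.e., the induced map Π_* : H₁(E) → H₁(B) is one-to-one. -/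
/-!
Write `z = (z₁, z₂)`. Each `z₂(b, ·)` has coordinate sum `0`, so it is a fiber boundary `∂^F f_b`,
and `z - ∂₂^E(-f) = (r, 0)` for some `r`. This chain is still a cycle, which says exactly that
every `r(a, ·)` is a fiber cycle. Multiplying `r` by a right inverse of the surjective `∂^B`
gives `w` with `∂^B w = r` whose rows are again fiber cycles; the connection fixes those, so
`∂₂^E w = (r, 0)`.
-/

open Matrix

noncomputable section

variable {F : Type*} [Field F] [Fintype F]
variable {B₀ B₁ F₀ F₁ : Type*} [Fintype B₀] [Fintype B₁] [Fintype F₀] [Fintype F₁]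
  [DecidableEq B₀] [DecidableEq B₁] [DecidableEq F₀] [DecidableEq F₁]

theorem Matrix.exists_mul_eq_one_of_surjective_mulVec {R m n : Type*} [Semiring R] [Fintype n]
    [DecidableEq m] (A : Matrix m n R) (hA : Function.Surjective A.mulVec) :
    ∃ S : Matrix n m R, A * S = 1 := by
  choose col hcol using fun i => hA (Pi.single i 1)
  refine ⟨(Matrix.of col)ᵀ, ?_⟩
  ext k i
  have hki := congrFun (hcol i) k
  rw [Matrix.mulVec, dotProduct] at hki
  rw [Matrix.mul_apply, Matrix.one_apply, ← Pi.single_apply, ← hki]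
  rfl

theorem Matrix.exists_mul_eq_and_mul_eq_zero {R m n o p : Type*} [Semiring R] [Fintype m]
    [Fintype n] [Fintype o] [DecidableEq m] {A : Matrix m n R} (hA : Function.Surjective A.mulVec)
    {C : Matrix m o R} {M : Matrix o p R} (hC : C * M = 0) :
    ∃ X : Matrix n o R, A * X = C ∧ X * M = 0 := by
  obtain ⟨S, hS⟩ := A.exists_mul_eq_one_of_surjective_mulVec hA
  exact ⟨S * C, by rw [← Matrix.mul_assoc, hS, Matrix.one_mul],
    by rw [Matrix.mul_assoc, hC, Matrix.mul_zero]⟩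

theorem Matrix.mul_transpose_eq_zero_iff {R m n o : Type*} [CommSemiring R] [Fintype n]
    (C : Matrix m n R) (D : Matrix o n R) : C * Dᵀ = 0 ↔ ∀ i, D *ᵥ C i = 0 := by
  simp only [← Matrix.vecMul_transpose, ← Matrix.mul_apply_eq_vecMul]
  exact ⟨fun h i => by rw [h]; rfl, funext⟩

section

-- Fresh variables, so that these lemmas carry only the instances they use.
variable {F : Type*} [Field F] {B₀ B₁ F₀ F₁ : Type*} [Fintype B₁] [Fintype F₁]
  (dB : Matrix B₀ B₁ F) (dF : Matrix F₀ F₁ F)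

theorem bundleD2_add (P1 : B₁ → B₀ → Matrix F₁ F₁ F) (w w' : B₁ × F₁ → F) :
    bundleD2 dB dF P1 (w + w') = bundleD2 dB dF P1 w + bundleD2 dB dF P1 w' := by
  have hsplit : ∀ b, (fun j => w (b, j) + w' (b, j)) = (fun j => w (b, j)) + fun j => w' (b, j) :=
    fun _ => rfl
  refine Prod.ext (funext fun p => ?_) (funext fun p => ?_) <;>
  simp only [bundleD2, hsplit, Prod.fst_add, Prod.snd_add, Pi.add_apply, Matrix.mulVec_add,
    mul_add, Finset.sum_add_distrib, neg_add]

theorem bundleD1_add [Fintype F₀] (P0 : B₁ → B₀ → Matrix F₀ F₀ F)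
    (z z' : ((B₀ × F₁) → F) × ((B₁ × F₀) → F)) :
    bundleD1 dB dF P0 (z + z') = bundleD1 dB dF P0 z + bundleD1 dB dF P0 z' := by
  have hsplit₁ : ∀ a, (fun j => (z + z').1 (a, j)) = (fun j => z.1 (a, j)) + fun j => z'.1 (a, j) :=
    fun _ => rfl
  have hsplit₂ : ∀ b, (fun i => (z + z').2 (b, i)) = (fun i => z.2 (b, i)) + fun i => z'.2 (b, i) :=
    fun _ => rfl
  funext p
  simp only [bundleD1, hsplit₁, hsplit₂, Pi.add_apply, Matrix.mulVec_add, mul_add,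
    Finset.sum_add_distrib]
  ring

theorem bundleD1_bundleD2 [Fintype F₀] {P0 : B₁ → B₀ → Matrix F₀ F₀ F}
    {P1 : B₁ → B₀ → Matrix F₁ F₁ F} (hcomp : ∀ b a, P0 b a * dF = dF * P1 b a)
    (w : B₁ × F₁ → F) : bundleD1 dB dF P0 (bundleD2 dB dF P1 w) = 0 := by
  funext ⟨a, i⟩
  have hfst : (fun j => (bundleD2 dB dF P1 w).1 (a, j)) =
      ∑ b, dB a b • P1 b a *ᵥ fun j => w (b, j) := by
    funext j
    simp [bundleD2, Finset.sum_apply]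
  have hsnd : ∀ b, (fun i => (bundleD2 dB dF P1 w).2 (b, i)) = -(dF *ᵥ fun j => w (b, j)) :=
    fun _ => rfl
  simp only [bundleD1, hfst, hsnd, Matrix.mulVec_sum, Matrix.mulVec_smul, Matrix.mulVec_mulVec,
    ← hcomp, Matrix.mulVec_neg, Finset.sum_apply, Pi.smul_apply, Pi.neg_apply, smul_eq_mul,
    mul_neg, Finset.sum_neg_distrib, add_neg_cancel, Pi.zero_apply]

theorem fiber_cycle_of_bundleD1_eq_zero [Fintype F₀] {P0 : B₁ → B₀ → Matrix F₀ F₀ F}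
    {r : B₀ × F₁ → F} (hr : bundleD1 dB dF P0 (r, 0) = 0) (a : B₀) :
    dF *ᵥ (fun j => r (a, j)) = 0 := by
  funext i
  simpa [bundleD1, ← Pi.zero_def] using congrFun hr (a, i)

theorem exists_bundleD2_snd_eq (P1 : B₁ → B₀ → Matrix F₁ F₁ F) [Fintype F₀]
    (hbdry : ∀ c : F₀ → F, (∑ i : F₀, c i = 0) → ∃ f : F₁ → F, dF.mulVec f = c)
    {c : B₁ × F₀ → F} (hc : ∀ b, ∑ i, c (b, i) = 0) :
    ∃ w : B₁ × F₁ → F, (bundleD2 dB dF P1 w).2 = c := by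
  choose f hf using fun b => hbdry (fun i => c (b, i)) (hc b)
  refine ⟨fun p => -f p.1 p.2, funext fun p => ?_⟩
  show -(dF *ᵥ -f p.1) p.2 = c p
  rw [Matrix.mulVec_neg, hf, Pi.neg_apply, neg_neg]

theorem exists_bundleD2_eq_of_fiber_cycles [Fintype B₀] [DecidableEq B₀]
    {P1 : B₁ → B₀ → Matrix F₁ F₁ F} (hBsurj : Function.Surjective dB.mulVec)
    (htriv : ∀ (b : B₁) (a : B₀) (zf : F₁ → F), dF *ᵥ zf = 0 → P1 b a *ᵥ zf = zf)
    {r : B₀ × F₁ → F} (hr : ∀ a, dF *ᵥ (fun j => r (a, j)) = 0) :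
    ∃ w : B₁ × F₁ → F, bundleD2 dB dF P1 w = (r, 0) := by
  obtain ⟨W, hW, hWcyc⟩ := Matrix.exists_mul_eq_and_mul_eq_zero hBsurj
    ((Matrix.mul_transpose_eq_zero_iff (Matrix.of fun a j => r (a, j)) dF).2 hr)
  rw [Matrix.mul_transpose_eq_zero_iff] at hWcyc
  refine ⟨fun p => W p.1 p.2, Prod.ext (funext fun ⟨a, j⟩ => ?_) (funext fun ⟨b, i⟩ => ?_)⟩
  · simp only [bundleD2, htriv _ a _ (hWcyc _)]
    rw [← Matrix.mul_apply, hW, Matrix.of_apply]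
  · simp [bundleD2, hWcyc b]

end

theorem bundle_projection_one_to_one_general
    (dB : Matrix B₀ B₁ F) (dF : Matrix F₀ F₁ F)
    (P0 : B₁ → B₀ → Matrix F₀ F₀ F) (P1 : B₁ → B₀ → Matrix F₁ F₁ F)
    (hcomp : ∀ b a, P0 b a * dF = dF * P1 b a)
    (hbdry : ∀ c : F₀ → F, (∑ i : F₀, c i = 0) → ∃ f : F₁ → F, dF.mulVec f = c)
    (hBsurj : Function.Surjective (dB.mulVec : (B₁ → F) → (B₀ → F)))
    (htriv : ∀ (b : B₁) (a : B₀) (zf : F₁ → F),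
      dF.mulVec zf = 0 → (P1 b a).mulVec zf = zf) :
    ∀ z : ((B₀ × F₁) → F) × ((B₁ × F₀) → F),
      bundleD1 dB dF P0 z = 0 →
      (fun b : B₁ => ∑ i : F₀, z.2 (b, i)) = 0 →
      ∃ w : B₁ × F₁ → F, bundleD2 dB dF P1 w = z := by
  intro z hz hproj
  obtain ⟨w₁, hw₁⟩ := exists_bundleD2_snd_eq dB dF P1 hbdry (congrFun hproj)
  set r := z.1 - (bundleD2 dB dF P1 w₁).1
  have hsplit : z = bundleD2 dB dF P1 w₁ + (r, 0) :=
    Prod.ext (by simp [r]) (by simp [hw₁])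
  have hr : bundleD1 dB dF P0 (r, 0) = 0 := by
    rwa [hsplit, bundleD1_add, bundleD1_bundleD2 dB dF hcomp, zero_add] at hz
  obtain ⟨w₂, hw₂⟩ := exists_bundleD2_eq_of_fiber_cycles dB dF hBsurj htriv
    (fiber_cycle_of_bundleD1_eq_zero dB dF hr)
  exact ⟨w₁ + w₂, by rw [bundleD2_add, hw₂, ← hsplit]⟩

/-- assume (ii) every column of `∂^F` sums to `0`; (iii) every fiber
0-chain with coordinate sum `0` lies in the column space of `∂^F`; (iv) `∂^B` is
surjective (vanishing zeroth Betti number of the base); and (v) every connection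
permutation acts trivially on fiber 1-cycles.  Then every `z ∈ ker ∂₁^E` with
`Π₁(z) = 0` lies in `im ∂₂^E`; i.e. the induced map `Π_* : H₁(E) → H₁(B)` is
one-to-one. -/
theorem bundle_projection_one_to_one
    (dB : Matrix B₀ B₁ F) (dF : Matrix F₀ F₁ F)
    (P0 : B₁ → B₀ → Matrix F₀ F₀ F) (P1 : B₁ → B₀ → Matrix F₁ F₁ F)
    (hP0 : ∀ b a, ∃ σ : Equiv.Perm F₀, P0 b a = σ.permMatrix F)
    (hP1 : ∀ b a, ∃ σ : Equiv.Perm F₁, P1 b a = σ.permMatrix F)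
    (hcomp : ∀ b a, P0 b a * dF = dF * P1 b a)
    (hcol : ∀ j : F₁, ∑ i : F₀, dF i j = 0)
    (hbdry : ∀ c : F₀ → F, (∑ i : F₀, c i = 0) → ∃ f : F₁ → F, dF.mulVec f = c)
    (hBsurj : Function.Surjective (dB.mulVec : (B₁ → F) → (B₀ → F)))
    (htriv : ∀ (b : B₁) (a : B₀) (zf : F₁ → F),
      dF.mulVec zf = 0 → (P1 b a).mulVec zf = zf) :
    ∀ z : ((B₀ × F₁) → F) × ((B₁ × F₀) → F),
      bundleD1 dB dF P0 z = 0 →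
      (fun b : B₁ => ∑ i : F₀, z.2 (b, i)) = 0 →
      ∃ w : B₁ × F₁ → F, bundleD2 dB dF P1 w = z :=
  bundle_projection_one_to_one_general dB dF P0 P1 hcomp hbdry hBsurj htriv
end
end
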